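/- arXiv:math/0008077 — 5 statements merged into one kernel-verified Lean document; each statement's English description precedes it below -/
import Mathlib

section
/- Let H be a countable group and let V be a nontrivial set of words. Then there exists a countable group G generated by two elements, together with an injective group homomorphism φ : H → G, such that the image φ(H) is a subnormal subgroup of G (i.e., there is a finite chain φ(H) = K₀ ⊴ K₁ ⊴ ⋯ ⊴ Kₙ = G with each term normal in the next) and φ(H) is contained in the verbal subgroup V(G). -/
universe u

/-- The verbal subgroup `V(G)` of a group `G` determined by a set `V` of words. -/
def verbalSubgroup (G : Type*) [Group G] (V : Set (FreeGroup ℕ)) : Subgroup G :=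
  Subgroup.closure {g | ∃ w ∈ V, ∃ φ : FreeGroup ℕ →* G, φ w = g}

/-- A subgroup `K ≤ G` is subnormal: there is a finite chain
`K = K₀ ⊴ K₁ ⊴ ⋯ ⊴ Kₙ = G` with each term normal in the next. -/
def IsSubnormalSubgroup {G : Type*} [Group G] (K : Subgroup G) : Prop :=
  ∃ (n : ℕ) (c : Fin (n + 1) → Subgroup G),
    c 0 = K ∧ c (Fin.last n) = ⊤ ∧
      ∀ i : Fin n, c i.castSucc ≤ c i.succ ∧ ((c i.castSucc).subgroupOf (c i.succ)).Normal

namespace SVE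

open SemidirectProduct Subgroup Multiplicative

/-! ### Arithmetic lemmas about powers of 4 -/

lemma pow4_le_helper {a b c d : ℕ} (hba : b ≤ a) (hdc : d ≤ c)
    (h : 4^a + 4^b = 4^c + 4^d) : a = c ∧ b = d := by
  have key : ∀ {x y z t : ℕ}, y ≤ x → t ≤ z → 4^x + 4^y = 4^z + 4^t → x ≤ z := by
    intro x y z t hyx htz heq
    by_contra hlt
    push_neg at hlt
    have h1 : 4^z + 4^t ≤ 2 * 4^z := by
      have := Nat.pow_le_pow_right (by norm_num : 1 ≤ 4) htz
      omega
    have h2 : 2 * 4^z < 4^(z+1) := by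
      have h0 : 0 < (4:ℕ)^z := Nat.pow_pos (by norm_num)
      have : (4:ℕ)^(z+1) = 4 * 4^z := by ring
      omega
    have h3 : (4:ℕ)^(z+1) ≤ 4^x := Nat.pow_le_pow_right (by norm_num) hlt
    have h4 : (4:ℕ)^x ≤ 4^x + 4^y := Nat.le_add_right _ _
    omega
  have hac : a = c := le_antisymm (key hba hdc h) (key hdc hba h.symm)
  subst hac
  have : (4:ℕ)^b = 4^d := by omega
  exact ⟨rfl, Nat.pow_right_injective (by norm_num) this⟩

lemma pow4_add_inj {a b c d : ℕ} (h : 4^a + 4^b = 4^c + 4^d) :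
    (a = c ∧ b = d) ∨ (a = d ∧ b = c) := by
  rcases le_total b a with hba | hab <;> rcases le_total d c with hdc | hcd
  · exact Or.inl (pow4_le_helper hba hdc h)
  · exact Or.inr (pow4_le_helper hba hcd (by omega))
  · have := pow4_le_helper hab hdc (by omega : 4^b + 4^a = 4^c + 4^d)
    exact Or.inr ⟨this.2, this.1⟩
  · have := pow4_le_helper hab hcd (by omega : 4^b + 4^a = 4^d + 4^c)
    exact Or.inl ⟨this.2, this.1⟩

lemma zpow4_inj {a b : ℕ} (h : (4:ℤ)^a = (4:ℤ)^b) : a = b := by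
  have : (4:ℕ)^a = 4^b := by exact_mod_cast h
  exact Nat.pow_right_injective (by norm_num) this

/-! ### Free groups are torsion-free (via Nielsen–Schreier) -/

lemma free_finite_eq_one (G : Type*) [Group G] [IsFreeGroup G] [Finite G] (g : G) : g = 1 := by
  rcases isEmpty_or_nonempty (IsFreeGroup.Generators G) with he | hne
  · have h : (MonoidHom.id G) = (1 : G →* G) := IsFreeGroup.ext_hom (fun a => he.elim a)
    have := DFunLike.congr_fun h g
    simpa using this
  · exfalso
    obtain ⟨a⟩ := hne
    let χ : G →* Multiplicative ℤ := IsFreeGroup.lift (fun _ => Multiplicative.ofAdd (1:ℤ))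
    obtain ⟨k, hk, hk1⟩ := (isOfFinOrder_of_finite (IsFreeGroup.of a : G)).exists_pow_eq_one
    have h2 : (χ (IsFreeGroup.of a))^k = 1 := by rw [← map_pow, hk1, map_one]
    have h2' : (Multiplicative.ofAdd (1:ℤ))^k = 1 := by
      rwa [show χ (IsFreeGroup.of a) = Multiplicative.ofAdd (1:ℤ) from IsFreeGroup.lift_of _ _] at h2
    have h3 := congrArg Multiplicative.toAdd h2'
    simp [toAdd_pow] at h3
    omega

lemma freeGroup_pow_ne_one {u : FreeGroup ℕ} (hu : u ≠ 1) (n : ℕ) : u ^ (n+1) ≠ 1 := by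
  intro hpow
  have hfin : IsOfFinOrder u := isOfFinOrder_iff_pow_eq_one.2 ⟨n+1, Nat.succ_pos n, hpow⟩
  haveI : Finite (Subgroup.zpowers u) := hfin.finite_zpowers.to_subtype
  have h1 : (⟨u, Subgroup.mem_zpowers u⟩ : Subgroup.zpowers u) = 1 := free_finite_eq_one _ _
  exact hu (by simpa [Subtype.ext_iff] using h1)

/-! ### The shift action and delta homomorphisms -/

/-- Shift automorphism action of a group `K` on the full function group `K → A`. -/
def SA (K : Type*) [Group K] (A : Type*) [Group A] : K →* MulAut (K → A) where
  toFun k :=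
    { toFun := fun f x => f (k⁻¹ * x)
      invFun := fun f x => f (k * x)
      left_inv := fun f => funext fun x => by simp
      right_inv := fun f => funext fun x => by simp
      map_mul' := fun f g => rfl }
  map_one' := by ext f x; simp
  map_mul' k₁ k₂ := by ext f x; simp [mul_assoc]

@[simp] lemma SA_apply {K : Type*} [Group K] {A : Type*} [Group A] (k : K) (f : K → A) (x : K) :
    SA K A k f x = f (k⁻¹ * x) := rfl

/-- The "delta function at the identity" homomorphism `A →* (K → A)`. -/
noncomputable def deltaHom (K : Type*) [Group K] [DecidableEq K] (A : Type*) [Group A] :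
    A →* (K → A) where
  toFun a := fun x => if x = 1 then a else 1
  map_one' := by funext x; simp
  map_mul' a b := by
    funext x
    by_cases h : x = 1 <;> simp [h]

lemma deltaHom_apply {K : Type*} [Group K] [DecidableEq K] {A : Type*} [Group A] (a : A) (x : K) :
    deltaHom K A a x = if x = 1 then a else 1 := rfl

lemma deltaHom_injective (K : Type*) [Group K] [DecidableEq K] (A : Type*) [Group A] :
    Function.Injective (deltaHom K A) := by
  intro a b h
  have := congrFun h 1
  simpa [deltaHom_apply] using this

lemma conj_deltaHom {K : Type*} [Group K] [DecidableEq K] {A : Type*} [Group A] (r : K → A) (a : A) :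
    r * deltaHom K A a * r⁻¹ = deltaHom K A (r 1 * a * (r 1)⁻¹) := by
  funext x
  by_cases h : x = 1 <;> simp [deltaHom_apply, h]

section Construction

variable (H : Type u) [Group H]

/-- The big wreath-like group `(FreeGroup ℕ → H) ⋊ FreeGroup ℕ`. -/
abbrev WH := (FreeGroup ℕ → H) ⋊[SA (FreeGroup ℕ) H] (FreeGroup ℕ)

/-- The ambient group `((Multiplicative ℤ) → WH) ⋊ Multiplicative ℤ`. -/
abbrev OM := (Multiplicative ℤ → WH H) ⋊[SA (Multiplicative ℤ) (WH H)] (Multiplicative ℤ)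

variable (w : FreeGroup ℕ) (hfun : ℕ → H)

open Classical in
/-- The conjugating base function: `h⁻¹` on negative powers of `w`, `1` elsewhere. -/
noncomputable def beta (h : H) : FreeGroup ℕ → H :=
  fun x => if ∃ m : ℕ, x = w⁻¹ ^ (m+1) then h⁻¹ else 1

/-- Key commutator identity in `WH`. -/
lemma keyW (hw : w ≠ 1) (h : H) :
    (inl (beta H w h) : WH H) * inr w * (inl (beta H w h))⁻¹ * (inr w)⁻¹
      = inl (deltaHom (FreeGroup ℕ) H h) := by
  classical
  have hstep : (inl (beta H w h) : WH H) * inr w * (inl (beta H w h))⁻¹ * (inr w)⁻¹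
      = inl (beta H w h * SA (FreeGroup ℕ) H w (beta H w h)⁻¹) := by
    refine SemidirectProduct.ext ?_ ?_ <;>
      simp [mul_left, mul_right, inv_left, inv_right]
  rw [hstep]
  congr 1
  funext y
  have hwinv : (w⁻¹ : FreeGroup ℕ) ≠ 1 := inv_ne_one.2 hw
  have hpow : ∀ m : ℕ, (w⁻¹ : FreeGroup ℕ) ^ (m+1) ≠ 1 := fun m => freeGroup_pow_ne_one hwinv m
  by_cases hy1 : y = 1
  · subst hy1
    have h1 : ¬ ∃ m : ℕ, (1 : FreeGroup ℕ) = w⁻¹ ^ (m+1) := by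
      rintro ⟨m, hm⟩; exact hpow m hm.symm
    have h2 : ∃ m : ℕ, (w⁻¹ * 1 : FreeGroup ℕ) = w⁻¹ ^ (m+1) := ⟨0, by simp⟩
    simp only [Pi.mul_apply, Pi.inv_apply, SA_apply, beta, deltaHom_apply]
    rw [if_neg h1, if_pos h2]
    simp
  · by_cases hym : ∃ m : ℕ, y = w⁻¹ ^ (m+1)
    · obtain ⟨m, rfl⟩ := hym
      have h1 : ∃ m' : ℕ, (w⁻¹ ^ (m+1) : FreeGroup ℕ) = w⁻¹ ^ (m'+1) := ⟨m, rfl⟩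
      have h2 : ∃ m' : ℕ, (w⁻¹ * w⁻¹ ^ (m+1) : FreeGroup ℕ) = w⁻¹ ^ (m'+1) :=
        ⟨m+1, by rw [← pow_succ']⟩
      simp only [Pi.mul_apply, Pi.inv_apply, SA_apply, beta, deltaHom_apply]
      rw [if_pos h1, if_pos h2]
      simp [hy1, freeGroup_pow_ne_one hw m, hw]
    · have h2 : ¬ ∃ m : ℕ, (w⁻¹ * y : FreeGroup ℕ) = w⁻¹ ^ (m+1) := by
        rintro ⟨m, hm⟩
        have hy : y = w⁻¹ ^ m := by
          have : (w⁻¹ : FreeGroup ℕ) * y = w⁻¹ * w⁻¹ ^ m := by rw [hm, pow_succ']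
          exact mul_left_cancel this
        cases m with
        | zero => exact hy1 (by simpa using hy)
        | succ k => exact hym ⟨k, hy⟩
      simp only [Pi.mul_apply, Pi.inv_apply, SA_apply, beta, deltaHom_apply]
      rw [if_neg hym, if_neg h2]
      simp [hy1]

open Classical in
/-- The magic generating function for the second generator. -/
noncomputable def FF : Multiplicative ℤ → WH H := fun z =>
  if h : ∃ i : ℕ, Multiplicative.toAdd z = (4:ℤ)^(2*i+1) then inr (FreeGroup.of h.choose)
  else if h2 : ∃ n : ℕ, Multiplicative.toAdd z = (4:ℤ)^(2*n+2) then
    inl (beta H w (hfun h2.choose))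
  else 1

lemma FF_odd (i : ℕ) :
    FF H w hfun (Multiplicative.ofAdd ((4:ℤ)^(2*i+1))) = inr (FreeGroup.of i) := by
  classical
  have hp : ∃ j : ℕ, Multiplicative.toAdd (Multiplicative.ofAdd ((4:ℤ)^(2*i+1)))
      = (4:ℤ)^(2*j+1) := ⟨i, by simp⟩
  have hch : hp.choose = i := by
    have := hp.choose_spec
    simp only [toAdd_ofAdd] at this
    have h2 := zpow4_inj this.symm
    omega
  rw [FF, dif_pos hp, hch]

lemma FF_even (n : ℕ) :
    FF H w hfun (Multiplicative.ofAdd ((4:ℤ)^(2*n+2))) = inl (beta H w (hfun n)) := by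
  classical
  have hp : ¬ ∃ j : ℕ, Multiplicative.toAdd (Multiplicative.ofAdd ((4:ℤ)^(2*n+2)))
      = (4:ℤ)^(2*j+1) := by
    rintro ⟨j, hj⟩
    simp only [toAdd_ofAdd] at hj
    have := zpow4_inj hj
    omega
  have hq : ∃ j : ℕ, Multiplicative.toAdd (Multiplicative.ofAdd ((4:ℤ)^(2*n+2)))
      = (4:ℤ)^(2*j+2) := ⟨n, by simp⟩
  have hch : hq.choose = n := by
    have := hq.choose_spec
    simp only [toAdd_ofAdd] at this
    have h2 := zpow4_inj this.symm
    omega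
  rw [FF, dif_neg hp, dif_pos hq, hch]

lemma FF_eq_one {z : Multiplicative ℤ}
    (h : ∀ e : ℕ, Multiplicative.toAdd z ≠ (4:ℤ)^e) : FF H w hfun z = 1 := by
  classical
  rw [FF, dif_neg, dif_neg]
  · rintro ⟨j, hj⟩; exact h (2*j+2) hj
  · rintro ⟨j, hj⟩; exact h (2*j+1) hj


/-! ### Generic semidirect product helpers -/

section Generic

variable {N K : Type*} [Group N] [Group K] {φ : K →* MulAut N}

lemma mul_left_of_right_one (x y : N ⋊[φ] K) (hx : x.right = 1) :
    (x * y).left = x.left * y.left := by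
  rw [mul_left, hx, map_one]
  simp

lemma inv_left_of_right_one (x : N ⋊[φ] K) (hx : x.right = 1) :
    (x⁻¹).left = x.left⁻¹ := by
  rw [inv_left, hx]
  simp

lemma conj_of_right_one (g x : N ⋊[φ] K) (hg : g.right = 1) (hx : x.right = 1) :
    g * x * g⁻¹ = inl (g.left * x.left * g.left⁻¹) := by
  refine SemidirectProduct.ext ?_ ?_ <;>
    simp [mul_left, mul_right, inv_left, inv_right, hg, hx]

end Generic


/-! ### The embedding homomorphism and the two generators -/

/-- The embedding `H →* OM H`. -/
noncomputable def Phi : H →* OM H :=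
  (inl : (Multiplicative ℤ → WH H) →* OM H).comp
    ((deltaHom (Multiplicative ℤ) (WH H)).comp
      ((inl : (FreeGroup ℕ → H) →* WH H).comp (deltaHom (FreeGroup ℕ) H)))

lemma Phi_apply (h : H) :
    Phi H h = inl (deltaHom (Multiplicative ℤ) (WH H)
      (inl (deltaHom (FreeGroup ℕ) H h))) := rfl

lemma Phi_injective : Function.Injective (Phi H) := by
  intro x y hxy
  rw [Phi_apply, Phi_apply] at hxy
  exact deltaHom_injective _ _ (inl_injective (deltaHom_injective _ _ (inl_injective hxy)))

/-- The lift sending generator `i` to the `4^(2i+1)`-shifted copy of `FF`. -/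
noncomputable def LL : FreeGroup ℕ →* (Multiplicative ℤ → WH H) :=
  FreeGroup.lift (fun i => fun x => FF H w hfun (Multiplicative.ofAdd ((4:ℤ)^(2*i+1)) * x))

lemma LL_apply (u : FreeGroup ℕ) (x : Multiplicative ℤ) :
    LL H w hfun u x
      = FreeGroup.lift (fun i => FF H w hfun (Multiplicative.ofAdd ((4:ℤ)^(2*i+1)) * x)) u := by
  have hhom : (Pi.evalMonoidHom (fun _ : Multiplicative ℤ => WH H) x).comp (LL H w hfun)
      = FreeGroup.lift (fun i => FF H w hfun (Multiplicative.ofAdd ((4:ℤ)^(2*i+1)) * x)) := by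
    apply FreeGroup.ext_hom
    intro i
    simp only [MonoidHom.comp_apply, LL, FreeGroup.lift_apply_of]
    rfl
  exact DFunLike.congr_fun hhom u

lemma LL_w_one : LL H w hfun w 1 = inr w := by
  rw [LL_apply]
  have h1 : (fun i => FF H w hfun (Multiplicative.ofAdd ((4:ℤ)^(2*i+1)) * 1))
      = fun i => (inr (FreeGroup.of i) : WH H) := by
    funext i
    rw [mul_one]
    exact FF_odd H w hfun i
  rw [h1]
  have h2 : FreeGroup.lift (fun i => (inr (FreeGroup.of i) : WH H))
      = (inr : FreeGroup ℕ →* WH H) := by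
    apply FreeGroup.ext_hom
    intro i
    rw [FreeGroup.lift_apply_of]
  rw [h2]

/-- Conjugates of the second generator by powers of the first. -/
noncomputable def cfun (p : ℤ) : OM H :=
  inr (Multiplicative.ofAdd (-p)) * inl (FF H w hfun) * (inr (Multiplicative.ofAdd (-p)))⁻¹

lemma cfun_eq (p : ℤ) :
    cfun H w hfun p = inl (fun x => FF H w hfun (Multiplicative.ofAdd p * x)) := by
  rw [cfun, show ((inr (Multiplicative.ofAdd (-p)) : OM H))⁻¹
      = inr (Multiplicative.ofAdd (-p))⁻¹ from (map_inv _ _).symm, ← inl_aut]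
  congr 1
  funext x
  rw [SA_apply]
  congr 1
  simp

/-- The main commutator identity. -/
lemma main_identity (hw : w ≠ 1) (n : ℕ) :
    cfun H w hfun ((4:ℤ)^(2*n+2)) * inl (LL H w hfun w) * (cfun H w hfun ((4:ℤ)^(2*n+2)))⁻¹
      * (inl (LL H w hfun w))⁻¹ = Phi H (hfun n) := by
  classical
  rw [cfun_eq, Phi_apply, ← map_inv, ← map_inv, ← map_mul, ← map_mul, ← map_mul]
  congr 1
  funext x
  simp only [Pi.mul_apply, Pi.inv_apply]
  by_cases hx : x = 1
  · subst hx
    have hγ1 : FF H w hfun (Multiplicative.ofAdd ((4:ℤ)^(2*n+2)) * 1) = inl (beta H w (hfun n)) := by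
      rw [mul_one]; exact FF_even H w hfun n
    rw [hγ1, LL_w_one, keyW H w hw (hfun n)]
    simp [deltaHom_apply]
  · have hRHS : deltaHom (Multiplicative ℤ) (WH H)
        (inl (deltaHom (FreeGroup ℕ) H (hfun n))) x = 1 := by
      simp [deltaHom_apply, hx]
    rw [hRHS]
    by_cases hγx : FF H w hfun (Multiplicative.ofAdd ((4:ℤ)^(2*n+2)) * x) = 1
    · rw [hγx]; group
    · have hexe : ∃ e : ℕ,
          Multiplicative.toAdd (Multiplicative.ofAdd ((4:ℤ)^(2*n+2)) * x) = (4:ℤ)^e := by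
        by_contra hne
        push_neg at hne
        exact hγx (FF_eq_one H w hfun hne)
      obtain ⟨e, he⟩ := hexe
      have hLx : LL H w hfun w x = 1 := by
        rw [LL_apply]
        have hfun1 : (fun i => FF H w hfun (Multiplicative.ofAdd ((4:ℤ)^(2*i+1)) * x))
            = fun _ => (1 : WH H) := by
          funext i
          apply FF_eq_one
          intro d hd
          simp only [toAdd_mul, toAdd_ofAdd] at he hd
          have hsum : (4:ℤ)^e + (4:ℤ)^(2*i+1) = (4:ℤ)^d + (4:ℤ)^(2*n+2) := by linarith
          have hsum' : (4:ℕ)^e + 4^(2*i+1) = 4^d + 4^(2*n+2) := by exact_mod_cast hsum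
          rcases pow4_add_inj hsum' with ⟨h1, h2⟩ | ⟨h1, h2⟩
          · omega
          · have hx0 : Multiplicative.toAdd x = 0 := by
              rw [h1] at he; linarith
            exact hx (Multiplicative.toAdd.injective (by rw [hx0]; rfl))
        rw [hfun1]
        have hone : FreeGroup.lift (fun _ : ℕ => (1 : WH H)) = 1 := by
          apply FreeGroup.ext_hom
          intro i
          simp [FreeGroup.lift_apply_of]
        rw [hone]
        rfl
      rw [hLx]
      group

/-! ### The subnormal chain subgroups -/

/-- Copies of `H` inside `WH`. -/
noncomputable def DW : Subgroup (WH H) :=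
  ((inl : (FreeGroup ℕ → H) →* WH H).comp (deltaHom (FreeGroup ℕ) H)).range

/-- Base elements whose value at `1` lies in the base of `WH`. -/
def Q1 : Subgroup (OM H) where
  carrier := {g | g.right = 1 ∧ (g.left 1).right = 1}
  one_mem' := by constructor <;> simp
  mul_mem' := by
    rintro x y ⟨hx1, hx2⟩ ⟨hy1, hy2⟩
    refine ⟨by simp [hx1, hy1], ?_⟩
    rw [mul_left_of_right_one x y hx1]
    simp [hx2, hy2]
  inv_mem' := by
    rintro x ⟨hx1, hx2⟩
    refine ⟨by simp [hx1], ?_⟩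
    rw [inv_left_of_right_one x hx1]
    simp [hx2]

/-- Base elements whose value at `1` is a delta copy of an element of `H`. -/
noncomputable def Q0 : Subgroup (OM H) where
  carrier := {g | g.right = 1 ∧ g.left 1 ∈ DW H}
  one_mem' := by
    refine ⟨by simp, ?_⟩
    simpa using (DW H).one_mem
  mul_mem' := by
    rintro x y ⟨hx1, hx2⟩ ⟨hy1, hy2⟩
    refine ⟨by simp [hx1, hy1], ?_⟩
    rw [mul_left_of_right_one x y hx1]
    exact mul_mem hx2 hy2
  inv_mem' := by
    rintro x ⟨hx1, hx2⟩
    refine ⟨by simp [hx1], ?_⟩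
    rw [inv_left_of_right_one x hx1]
    exact inv_mem hx2

lemma Phi_mem_Q0 (h : H) : Phi H h ∈ Q0 H := by
  constructor
  · rw [Phi_apply]; simp
  · rw [Phi_apply]
    simp only [left_inl]
    rw [deltaHom_apply, if_pos rfl]
    exact ⟨h, rfl⟩

lemma Q0_le_Q1 : Q0 H ≤ Q1 H := by
  rintro g ⟨h1, ⟨r, hr⟩⟩
  refine ⟨h1, ?_⟩
  rw [← hr]
  simp

/-- Conjugation of a `Phi`-element by a `Q0`-element stays in the `Phi`-copy of `H`. -/
lemma conj_Phi (g : OM H) (hg : g ∈ Q0 H) (h : H) :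
    ∃ h' : H, g * Phi H h * g⁻¹ = Phi H h' := by
  obtain ⟨hg1, ⟨h1, hh1⟩⟩ := hg
  refine ⟨h1 * h * h1⁻¹, ?_⟩
  rw [Phi_apply, Phi_apply, conj_of_right_one g _ hg1 (by simp), left_inl, conj_deltaHom,
    ← hh1]
  simp only [MonoidHom.comp_apply]
  congr 1
  congr 1
  rw [← map_inv, ← map_mul, ← map_mul, conj_deltaHom]
  simp [deltaHom_apply]

lemma conj_Q0 (g x : OM H) (hg : g ∈ Q1 H) (hx : x ∈ Q0 H) : g * x * g⁻¹ ∈ Q0 H := by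
  obtain ⟨hg1, hg2⟩ := hg
  obtain ⟨hx1, hx2⟩ := hx
  have hr : (g * x * g⁻¹).right = 1 := by simp [hg1, hx1]
  refine ⟨hr, ?_⟩
  have hleft : (g * x * g⁻¹).left 1 = g.left 1 * x.left 1 * (g.left 1)⁻¹ := by
    rw [mul_left_of_right_one _ _ (by simp [hg1, hx1] : (g * x).right = 1),
      mul_left_of_right_one _ _ hg1, inv_left_of_right_one _ hg1]
    simp
  rw [hleft]
  obtain ⟨r, hr'⟩ := hx2
  rw [← hr']
  simp only [MonoidHom.comp_apply] at hr' ⊢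
  rw [conj_of_right_one _ _ hg2 (by simp), left_inl, conj_deltaHom]
  exact ⟨(g.left 1).left 1 * r * ((g.left 1).left 1)⁻¹, rfl⟩

lemma conj_Q1 (g x : OM H) (hg : g.right = 1) (hx : x ∈ Q1 H) : g * x * g⁻¹ ∈ Q1 H := by
  obtain ⟨hx1, hx2⟩ := hx
  refine ⟨by simp [hg, hx1], ?_⟩
  have hleft : (g * x * g⁻¹).left 1 = g.left 1 * x.left 1 * (g.left 1)⁻¹ := by
    rw [mul_left_of_right_one _ _ (by simp [hg, hx1] : (g * x).right = 1),
      mul_left_of_right_one _ _ hg, inv_left_of_right_one _ hg]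
    simp
  rw [hleft]
  simp [hx2]

end Construction

end SVE

open SemidirectProduct

theorem subnormal_verbal_embedding_into_two_generated
    {H : Type u} [Group H] (hH : Countable H)
    (V : Set (FreeGroup ℕ)) (hV : ∃ w ∈ V, w ≠ 1) :
    ∃ G : GrpCat.{u}, Countable ↥G ∧ (∃ a b : ↥G, Subgroup.closure {a, b} = ⊤) ∧
      ∃ φ : H →* ↥G, Function.Injective φ ∧
        IsSubnormalSubgroup φ.range ∧ φ.range ≤ verbalSubgroup ↥G V := by
  classical
  obtain ⟨w, hwV, hw⟩ := hV
  obtain ⟨hfun, hfsurj⟩ := exists_surjective_nat H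
  let a : SVE.OM H := inr (Multiplicative.ofAdd (1:ℤ))
  let b : SVE.OM H := inl (SVE.FF H w hfun)
  let G : Subgroup (SVE.OM H) := Subgroup.closure {a, b}
  have haG : a ∈ G := Subgroup.subset_closure (Set.mem_insert _ _)
  have hbG : b ∈ G := Subgroup.subset_closure (Set.mem_insert_of_mem _ rfl)
  have hinr : ∀ m : ℤ, (inr (Multiplicative.ofAdd m) : SVE.OM H) ∈ G := by
    intro m
    have h1 : (inr (Multiplicative.ofAdd m) : SVE.OM H) = a ^ m := by
      show _ = (inr (Multiplicative.ofAdd (1:ℤ)) : SVE.OM H) ^ m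
      rw [← map_zpow]
      congr 1
      apply Multiplicative.toAdd.injective
      simp
    rw [h1]
    exact Subgroup.zpow_mem G haG m
  have hcmem : ∀ p : ℤ, SVE.cfun H w hfun p ∈ G := fun p =>
    mul_mem (mul_mem (hinr _) hbG) (inv_mem (hinr _))
  have hLmem : ∀ u : FreeGroup ℕ, (inl (SVE.LL H w hfun u) : SVE.OM H) ∈ G := by
    intro u
    induction u using FreeGroup.induction_on with
    | C1 => simpa using one_mem G
    | of i =>
        have h1 : SVE.LL H w hfun (FreeGroup.of i)
            = fun x => SVE.FF H w hfun (Multiplicative.ofAdd ((4:ℤ)^(2*i+1)) * x) :=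
          FreeGroup.lift_apply_of
        show (inl (SVE.LL H w hfun (FreeGroup.of i)) : SVE.OM H) ∈ G
        rw [h1, ← SVE.cfun_eq H w hfun ((4:ℤ)^(2*i+1))]
        exact hcmem _
    | inv_of i hi => rw [map_inv, map_inv]; exact inv_mem hi
    | mul x y hx hy => rw [map_mul, map_mul]; exact mul_mem hx hy
  have hPhimem : ∀ h : H, SVE.Phi H h ∈ G := by
    intro h
    obtain ⟨n, rfl⟩ := hfsurj h
    rw [← SVE.main_identity H w hfun hw n]
    exact mul_mem (mul_mem (mul_mem (hcmem _) (hLmem w)) (inv_mem (hcmem _)))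
      (inv_mem (hLmem w))
  let φ : H →* ↥G := (SVE.Phi H).codRestrict G hPhimem
  have hφval : ∀ h, (φ h : SVE.OM H) = SVE.Phi H h := fun h => rfl
  refine ⟨GrpCat.of ↥G, ?_, ?_, φ, ?_, ?_, ?_⟩
  · -- Countable
    let f2 : Bool → SVE.OM H := fun c => if c then a else b
    have hr2 : Set.range f2 = {a, b} := by
      ext x
      constructor
      · rintro ⟨c, rfl⟩
        cases c
        · exact Or.inr rfl
        · exact Or.inl rfl
      · rintro (rfl | rfl)
        · exact ⟨true, rfl⟩
        · exact ⟨false, rfl⟩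
    have hGeq : G = (FreeGroup.lift f2).range := by
      rw [FreeGroup.range_lift_eq_closure, hr2]
    haveI : Countable (FreeGroup Bool) := FreeGroup.toWord_injective.countable
    haveI hc : Countable ↥((FreeGroup.lift f2).range) :=
      (MonoidHom.rangeRestrict_surjective (FreeGroup.lift f2)).countable
    exact hGeq ▸ hc
  · -- two generators
    refine ⟨⟨a, haG⟩, ⟨b, hbG⟩, ?_⟩
    have h1 := Subgroup.closure_preimage_eq_top ({a, b} : Set (SVE.OM H))
    have hset : ((Subgroup.closure ({a, b} : Set (SVE.OM H))).subtype ⁻¹' {a, b})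
        = {(⟨a, haG⟩ : ↥G), ⟨b, hbG⟩} := by
      ext x
      simp [Subtype.ext_iff]
    rw [hset] at h1
    exact h1
  · -- injective
    intro x y hxy
    exact SVE.Phi_injective H (congrArg Subtype.val hxy)
  · -- subnormal
    let K3 : Subgroup (SVE.OM H) := (rightHom : SVE.OM H →* Multiplicative ℤ).ker
    let C : Fin 5 → Subgroup ↥G := fun i => match i with
      | ⟨0, _⟩ => φ.range
      | ⟨1, _⟩ => (SVE.Q0 H).subgroupOf G
      | ⟨2, _⟩ => (SVE.Q1 H).subgroupOf G
      | ⟨3, _⟩ => K3.subgroupOf G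
      | ⟨4, _⟩ => ⊤
    have hle0 : φ.range ≤ (SVE.Q0 H).subgroupOf G := by
      rintro x ⟨h, rfl⟩
      rw [Subgroup.mem_subgroupOf]
      exact SVE.Phi_mem_Q0 H h
    have hle1 : (SVE.Q0 H).subgroupOf G ≤ (SVE.Q1 H).subgroupOf G := by
      intro x hx
      rw [Subgroup.mem_subgroupOf] at *
      exact SVE.Q0_le_Q1 H hx
    have hle2 : (SVE.Q1 H).subgroupOf G ≤ K3.subgroupOf G := by
      intro x hx
      rw [Subgroup.mem_subgroupOf] at *
      exact hx.1
    have hn0 : ((φ.range).subgroupOf ((SVE.Q0 H).subgroupOf G)).Normal := by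
      rw [Subgroup.normal_subgroupOf_iff hle0]
      rintro x y ⟨h, rfl⟩ hy
      rw [Subgroup.mem_subgroupOf] at hy
      obtain ⟨h', hh'⟩ := SVE.conj_Phi H (↑y) hy h
      exact ⟨h', Subtype.ext hh'.symm⟩
    have hn1 : (((SVE.Q0 H).subgroupOf G).subgroupOf ((SVE.Q1 H).subgroupOf G)).Normal := by
      rw [Subgroup.normal_subgroupOf_iff hle1]
      intro x y hx hy
      rw [Subgroup.mem_subgroupOf] at *
      exact SVE.conj_Q0 H _ _ hy hx
    have hn2 : (((SVE.Q1 H).subgroupOf G).subgroupOf (K3.subgroupOf G)).Normal := by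
      rw [Subgroup.normal_subgroupOf_iff hle2]
      intro x y hx hy
      rw [Subgroup.mem_subgroupOf] at *
      exact SVE.conj_Q1 H _ _ hy hx
    have hn3 : ((K3.subgroupOf G).subgroupOf (⊤ : Subgroup ↥G)).Normal := by
      rw [Subgroup.normal_subgroupOf_iff le_top]
      intro x y hx _
      rw [Subgroup.mem_subgroupOf] at *
      show rightHom ((↑y * ↑x * (↑y)⁻¹ : SVE.OM H)) = 1
      rw [map_mul, map_mul, map_inv, MonoidHom.mem_ker.mp hx]
      group
    refine ⟨4, C, rfl, rfl, ?_⟩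
    intro i
    fin_cases i
    · exact ⟨hle0, hn0⟩
    · exact ⟨hle1, hn1⟩
    · exact ⟨hle2, hn2⟩
    · exact ⟨le_top, hn3⟩
  · -- verbal
    show φ.range ≤ verbalSubgroup ↥G V
    rintro x ⟨h, rfl⟩
    obtain ⟨n, rfl⟩ := hfsurj h
    let ψ : FreeGroup ℕ →* ↥G :=
      ((inl : _ →* SVE.OM H).comp (SVE.LL H w hfun)).codRestrict G (fun u => hLmem u)
    let c' : ↥G := ⟨SVE.cfun H w hfun ((4:ℤ)^(2*n+2)), hcmem _⟩
    let ψ' : FreeGroup ℕ →* ↥G := (MulAut.conj c').toMonoidHom.comp ψ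
    have hx : φ (hfun n) = ψ' w * (ψ w)⁻¹ := by
      apply Subtype.ext
      rw [hφval, ← SVE.main_identity H w hfun hw n]
      rfl
    rw [hx]
    exact mul_mem (Subgroup.subset_closure ⟨w, hwV, ψ', rfl⟩)
      (inv_mem (Subgroup.subset_closure ⟨w, hwV, ψ, rfl⟩))
end

section
/- Let H be an infinite group and V a set of words. Suppose there exists some group G possessing a normal subgroup H̃ isomorphic to H with H̃ contained in the verbal subgroup V(G). Then there exists a group G₁ whose cardinality equals the cardinality of H, possessing a normal subgroup isomorphic to H that is contained in the verbal subgroup V(G₁). -/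
universe u v

section Aux

open Subgroup Cardinal

variable {G : Type*} [Group G] (V : Set (FreeGroup ℕ))

/-- The set of images of words in `V`. -/
def wordImages (G : Type*) [Group G] (V : Set (FreeGroup ℕ)) : Set G :=
  {g | ∃ w ∈ V, ∃ φ : FreeGroup ℕ →* G, φ w = g}

lemma verbalSubgroup_eq (G : Type*) [Group G] (V : Set (FreeGroup ℕ)) :
    verbalSubgroup G V = Subgroup.closure (wordImages G V) := rfl

attribute [local instance] Classical.propDecidable

/-- For a word image `g`, a chosen countable set of generators such that `g` lies in the
verbal subgroup of any subgroup containing them. -/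
noncomputable def gensOf (g : G) : Set G :=
  if hg : g ∈ wordImages G V then
    Set.range fun n => hg.choose_spec.2.choose (FreeGroup.of n)
  else ∅

lemma gensOf_countable (g : G) : (gensOf V g).Countable := by
  unfold gensOf
  split
  · exact Set.countable_range _
  · exact Set.countable_empty

lemma mem_map_verbal_of_gensOf_subset {g : G} (hg : g ∈ wordImages G V)
    (G₁ : Subgroup G) (hsub : gensOf V g ⊆ (G₁ : Set G)) :
    g ∈ (verbalSubgroup ↥G₁ V).map G₁.subtype := by
  obtain ⟨hwV, hφ⟩ := hg.choose_spec
  set w := hg.choose with hw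
  set φ := hφ.choose with hφdef
  have hφw : φ w = g := hφ.choose_spec
  have hr : ∀ n, φ (FreeGroup.of n) ∈ G₁ := by
    intro n
    apply hsub
    rw [gensOf, dif_pos hg]
    exact ⟨n, rfl⟩
  set ψ : FreeGroup ℕ →* ↥G₁ := FreeGroup.lift fun n => (⟨φ (FreeGroup.of n), hr n⟩ : ↥G₁)
  have hcomp : G₁.subtype.comp ψ = φ := by
    apply FreeGroup.ext_hom
    intro a
    simp [ψ]
  have hψ : ψ w ∈ verbalSubgroup ↥G₁ V :=
    Subgroup.subset_closure ⟨w, hwV, ψ, rfl⟩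
  refine ⟨ψ w, hψ, ?_⟩
  have : G₁.subtype (ψ w) = φ w := by rw [← hcomp]; rfl
  rw [this, hφw]

lemma verbal_map_le {G' : Type*} [Group G'] (f : G →* G') :
    (verbalSubgroup G V).map f ≤ verbalSubgroup G' V := by
  rw [verbalSubgroup_eq, verbalSubgroup_eq, MonoidHom.map_closure]
  apply Subgroup.closure_mono
  rintro _ ⟨g, ⟨w, hw, φ, rfl⟩, rfl⟩
  exact ⟨w, hw, f.comp φ, rfl⟩

lemma mk_subgroup_closure_le (s : Set G) :
    #(Subgroup.closure s) ≤ max #s ℵ₀ := by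
  have hsurj : Function.Surjective
      (fun l : List ↥(s ∪ s⁻¹) => (⟨(l.map Subtype.val).prod,
        list_prod_mem fun x hx => by
          obtain ⟨⟨y, hy⟩, _, rfl⟩ := List.mem_map.mp hx
          rcases hy with hy | hy
          · exact subset_closure hy
          · exact (Subgroup.inv_mem_iff _).mp (subset_closure hy)⟩ :
        ↥(Subgroup.closure s))) := by
    rintro ⟨x, hx⟩
    have hx' : x ∈ Submonoid.closure (s ∪ s⁻¹) := by
      rw [← Subgroup.closure_toSubmonoid]; exact hx
    obtain ⟨l, hl, hprod⟩ := Submonoid.exists_list_of_mem_closure hx'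
    refine ⟨l.attach.map fun y => ⟨y.1, hl y.1 y.2⟩, ?_⟩
    ext
    simp only [List.map_map]
    simpa using hprod
  calc #(Subgroup.closure s) ≤ #(List ↥(s ∪ s⁻¹)) := mk_le_of_surjective hsurj
    _ ≤ max ℵ₀ #(↥(s ∪ s⁻¹)) := mk_list_le_max _
    _ ≤ max ℵ₀ (max #s ℵ₀) := by
        refine max_le_max le_rfl ?_
        calc #(↥(s ∪ s⁻¹)) ≤ #s + #(s⁻¹ : Set G) := mk_union_le _ _
          _ = #s + #s := by
              congr 1
              rw [← Set.image_inv_eq_inv]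
              exact mk_image_eq inv_injective
          _ ≤ max #s ℵ₀ := by
              rcases le_or_gt ℵ₀ #s with h | h
              · rw [add_eq_max h, max_self]; exact le_max_left _ _
              · exact le_of_lt (lt_of_lt_of_le (add_lt_aleph0 h h) (le_max_right _ _))
    _ = max #s ℵ₀ := by rw [max_comm ℵ₀, max_assoc, max_self]

end Aux

open Cardinal in
theorem normal_verbal_embedding_same_cardinality
    {H : Type u} [Group H] (hH : Infinite H) (V : Set (FreeGroup ℕ))
    (G : Type v) [Group G] (Htilde : Subgroup G) (hnorm : Htilde.Normal)
    (hiso : Nonempty (H ≃* ↥Htilde)) (hle : Htilde ≤ verbalSubgroup G V) :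
    ∃ G₁ : GrpCat.{u}, Cardinal.mk ↥G₁ = Cardinal.mk H ∧
      ∃ K : Subgroup ↥G₁, K.Normal ∧ Nonempty (H ≃* ↥K) ∧ K ≤ verbalSubgroup ↥G₁ V := by
  classical
  obtain ⟨e⟩ := hiso
  haveI : Infinite ↥Htilde := Infinite.of_injective e e.injective
  set S := wordImages G V with hS
  -- choose, for each element of Htilde, a list of elements of S ∪ S⁻¹ whose product is it
  have hlist : ∀ h : ↥Htilde, ∃ l : List G,
      (∀ y ∈ l, y ∈ S ∪ S⁻¹) ∧ l.prod = (h : G) := by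
    intro h
    have hx : (h : G) ∈ Subgroup.closure S := hle h.2
    have hx' : (h : G) ∈ Submonoid.closure (S ∪ S⁻¹) := by
      rw [← Subgroup.closure_toSubmonoid]; exact hx
    exact Submonoid.exists_list_of_mem_closure hx'
  choose lst hlst hprod using hlist
  set A : Set G := ⋃ h : ↥Htilde, ⋃ y ∈ lst h, (gensOf V y ∪ gensOf V y⁻¹) with hA
  have hAcount : ∀ h : ↥Htilde, (⋃ y ∈ lst h, (gensOf V y ∪ gensOf V y⁻¹)).Countable := by
    intro h
    apply Set.Countable.biUnion (List.finite_toSet _).countable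
    intro y _
    exact (gensOf_countable V y).union (gensOf_countable V _)
  set G₁ : Subgroup G := Subgroup.closure ((Htilde : Set G) ∪ A) with hG₁
  have hHt : (Htilde : Set G) ⊆ (G₁ : Set G) :=
    subset_trans Set.subset_union_left Subgroup.subset_closure
  have hAsub : A ⊆ (G₁ : Set G) :=
    subset_trans Set.subset_union_right Subgroup.subset_closure
  -- cardinality of G₁
  have hcardle : Cardinal.mk ↥G₁ ≤ Cardinal.mk ↥Htilde := by
    have h1 : Cardinal.mk ↥G₁ ≤ max #(((Htilde : Set G) ∪ A : Set G)) Cardinal.aleph0 :=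
      mk_subgroup_closure_le _
    have hAle : #A ≤ Cardinal.mk ↥Htilde := by
      calc #A ≤ #(↥Htilde) * ⨆ h : ↥Htilde, #(⋃ y ∈ lst h, (gensOf V y ∪ gensOf V y⁻¹)) :=
            Cardinal.mk_iUnion_le _
        _ ≤ #(↥Htilde) * Cardinal.aleph0 :=
            mul_le_mul_right (ciSup_le' fun h => (hAcount h).le_aleph0) _
        _ = #(↥Htilde) := Cardinal.mul_aleph0_eq (Cardinal.aleph0_le_mk _)
    have h2 : #(((Htilde : Set G) ∪ A : Set G)) ≤ Cardinal.mk ↥Htilde := by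
      calc #(((Htilde : Set G) ∪ A : Set G)) ≤ #((Htilde : Set G)) + #A := Cardinal.mk_union_le _ _
        _ ≤ Cardinal.mk ↥Htilde + Cardinal.mk ↥Htilde := add_le_add (le_of_eq rfl) hAle
        _ = Cardinal.mk ↥Htilde := Cardinal.add_eq_self (Cardinal.aleph0_le_mk _)
    calc Cardinal.mk ↥G₁ ≤ max #(((Htilde : Set G) ∪ A : Set G)) Cardinal.aleph0 := h1
      _ ≤ Cardinal.mk ↥Htilde := max_le h2 (Cardinal.aleph0_le_mk _)
  have hcardge : Cardinal.mk ↥Htilde ≤ Cardinal.mk ↥G₁ :=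
    Cardinal.mk_le_mk_of_subset hHt
  have hcard : Cardinal.mk ↥G₁ = Cardinal.mk ↥Htilde := le_antisymm hcardle hcardge
  -- transferring to universe u
  have hliftH : Cardinal.lift.{v} (Cardinal.mk H) = Cardinal.lift.{u} (Cardinal.mk ↥G₁) := by
    rw [hcard]
    exact Cardinal.lift_mk_eq'.mpr ⟨e.toEquiv⟩
  obtain ⟨eq1⟩ : Nonempty (H ≃ ↥G₁) := Cardinal.lift_mk_eq'.mp hliftH
  haveI : Small.{u} ↥G₁ := small_of_injective eq1.symm.injective
  set f : Shrink.{u} ↥G₁ ≃* ↥G₁ := Shrink.mulEquiv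
  refine ⟨GrpCat.of (Shrink.{u} ↥G₁), ?_, ?_⟩
  · exact Cardinal.mk_congr (((equivShrink ↥G₁).symm.trans eq1.symm))
  · -- the subgroup inside G₁
    have hle' : Htilde ≤ G₁ := hHt
    set K₁ : Subgroup ↥G₁ := Htilde.subgroupOf G₁ with hK₁
    have hK₁norm : K₁.Normal := hnorm.subgroupOf G₁
    have hK₁iso : H ≃* ↥K₁ := e.trans (Subgroup.subgroupOfEquivOfLe hle').symm
    have hK₁le : K₁ ≤ verbalSubgroup ↥G₁ V := by
      intro x hx
      have hx' : (x : G) ∈ Htilde := hx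
      set h : ↥Htilde := ⟨(x : G), hx'⟩ with hh
      set W : Subgroup G := (verbalSubgroup ↥G₁ V).map G₁.subtype with hW
      have hmem : ∀ y ∈ lst h, y ∈ W := by
        intro y hy
        have hAy : gensOf V y ∪ gensOf V y⁻¹ ⊆ A := by
          intro z hz
          exact Set.mem_iUnion.mpr ⟨h, Set.mem_iUnion.mpr ⟨y, Set.mem_iUnion.mpr ⟨hy, hz⟩⟩⟩
        rcases hlst h y hy with hyS | hyS
        · exact mem_map_verbal_of_gensOf_subset V hyS G₁
            (subset_trans (subset_trans Set.subset_union_left hAy) hAsub)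
        · have : y⁻¹ ∈ W := mem_map_verbal_of_gensOf_subset V hyS G₁
            (subset_trans (subset_trans Set.subset_union_right hAy) hAsub)
          simpa using W.inv_mem this
      have : (lst h).prod ∈ W := list_prod_mem hmem
      rw [hprod h] at this
      obtain ⟨z, hz, hzx⟩ := this
      have : z = x := Subtype.ext hzx
      rwa [this] at hz
    set K : Subgroup (Shrink.{u} ↥G₁) := K₁.map f.symm.toMonoidHom with hK
    refine ⟨K, ?_, ?_, ?_⟩
    · exact Subgroup.Normal.map hK₁norm f.symm.toMonoidHom f.symm.surjective
    · exact ⟨hK₁iso.trans (f.symm.subgroupMap K₁)⟩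
    · calc K ≤ (verbalSubgroup ↥G₁ V).map f.symm.toMonoidHom :=
            Subgroup.map_mono hK₁le
        _ ≤ verbalSubgroup (Shrink.{u} ↥G₁) V := verbal_map_le V _
end

section
/- Let U be a set of words and let H be a countable group satisfying the laws U (that is, every homomorphism from the free group on countably many generators to H maps every element of U to the identity). Then there exists a group G generated by two elements such that the second derived subgroup G'' of G satisfies the laws U (so that G lies in the product variety 𝔘𝔄²), and G has a subnormal subgroup H̃ with H̃ isomorphic to H; moreover H̃ can be chosen inside the second derived subgroup G''. -/
universe u

/-- A group `K` satisfies the laws `U` (a set of elements of the free group on countably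
many generators) if every homomorphism from the free group to `K` maps every element
of `U` to the identity. -/
def SatisfiesLaws (K : Type*) [Group K] (U : Set (FreeGroup ℕ)) : Prop :=
  ∀ φ : FreeGroup ℕ →* K, ∀ w ∈ U, φ w = 1

namespace NeumannEmbedding

open scoped commutatorElement

open SemidirectProduct Subgroup Function Multiplicative

variable (K : Type u) [Group K]

/-- The shift automorphism of `ℤ → K`. -/
def shiftAut (k : ℤ) : MulAut (ℤ → K) where
  toFun f := fun n => f (n - k)
  invFun f := fun n => f (n + k)
  left_inv f := funext fun n => by simp
  right_inv f := funext fun n => by simp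
  map_mul' f g := rfl

/-- The shift action of `Multiplicative ℤ` on `ℤ → K`. -/
def shiftHom : Multiplicative ℤ →* MulAut (ℤ → K) where
  toFun k := shiftAut K (Multiplicative.toAdd k)
  map_one' := by ext f n; simp [shiftAut]
  map_mul' x y := by ext f n; simp [shiftAut, sub_sub]

/-- The (complete) wreath product of `K` by `ℤ`. -/
abbrev W := (ℤ → K) ⋊[shiftHom K] Multiplicative ℤ

variable {K}

lemma W_tpow (k : ℤ) : (inr (ofAdd 1) : W K) ^ k = inr (ofAdd k) := by
  rw [← MonoidHom.map_zpow]
  congr 1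
  rw [← ofAdd_zsmul]
  simp

lemma W_conj (k : ℤ) (f : ℤ → K) :
    (inr (ofAdd 1) : W K) ^ k * inl f * ((inr (ofAdd 1) : W K) ^ k)⁻¹ =
      inl (fun n => f (n - k)) := by
  rw [W_tpow, ← MonoidHom.map_inv, ← inl_aut]
  rfl

lemma W_comm_inl (f g : ℤ → K) :
    ⁅(inl f : W K), (inl g : W K)⁆ = (inl (fun n => ⁅f n, g n⁆) : W K) := by
  rw [commutatorElement_def, ← MonoidHom.map_inv, ← MonoidHom.map_inv,
    ← MonoidHom.map_mul, ← MonoidHom.map_mul, ← MonoidHom.map_mul]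
  rfl

lemma W_comm_inr_inl (k : ℤ) (f : ℤ → K) :
    ⁅(inr (ofAdd 1) : W K) ^ k, (inl f : W K)⁆ = (inl ((fun n => f (n - k)) * f⁻¹) : W K) := by
  rw [commutatorElement_def, mul_assoc _ _ ((inl f)⁻¹), ← mul_assoc, W_conj,
    ← MonoidHom.map_inv, ← MonoidHom.map_mul]

lemma W_comm_inl_inr (k : ℤ) (f : ℤ → K) :
    ⁅(inl f : W K), (inr (ofAdd 1) : W K) ^ k⁆ = inl (f * (fun n => f⁻¹ (n - k))) := by
  have : (inl f : W K) * ((inr (ofAdd 1) : W K) ^ k * (inl f)⁻¹ * ((inr (ofAdd 1) : W K) ^ k)⁻¹)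
      = inl (f * fun n => f⁻¹ (n - k)) := by
    rw [← MonoidHom.map_inv, W_conj, ← MonoidHom.map_mul]
  rw [commutatorElement_def, mul_assoc, mul_assoc, ← mul_assoc ((inr (ofAdd 1) : W K)^k), this]

lemma left_mul_of_right_one {g h : W K} (hg : g.right = 1) :
    (g * h).left = g.left * h.left := by
  simp [hg]

lemma left_inv_of_right_one {g : W K} (hg : g.right = 1) :
    (g⁻¹).left = g.left⁻¹ := by
  simp [hg]

/-! ### Arithmetic lemmas about powers of two -/

lemma powinj {b d : ℕ} (h : (2:ℤ) ^ b = 2 ^ d) : b = d := by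
  have h' : (2:ℕ) ^ b = 2 ^ d := by exact_mod_cast h
  exact Nat.pow_right_injective (le_refl 2) h'

lemma two_pow_lt {x w : ℕ} (h : (2:ℤ) ^ x < 2 ^ w) : x < w := by
  by_contra hc
  exact absurd (pow_le_pow_right₀ (by norm_num) (not_lt.mp hc)) (not_le.mpr h)

lemma L2 {x y w : ℕ} (hxy : x < y) : (2:ℤ) ^ x + 2 ^ y ≠ 2 ^ w := by
  intro h
  have hyw : y < w := two_pow_lt (by
    have : (0:ℤ) < 2 ^ x := by positivity
    linarith)
  have d1 : (2:ℤ) ^ (x+1) ∣ 2 ^ y := pow_dvd_pow 2 hxy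
  have d2 : (2:ℤ) ^ (x+1) ∣ 2 ^ w := pow_dvd_pow 2 (by omega)
  have d3 : (2:ℤ) ^ (x+1) ∣ 2 ^ x := by
    have : (2:ℤ) ^ x = 2 ^ w - 2 ^ y := by linarith
    rw [this]; exact dvd_sub d2 d1
  have hle : (2:ℤ) ^ (x+1) ≤ 2 ^ x := Int.le_of_dvd (by positivity) d3
  have : (2:ℤ) ^ x < 2 ^ (x+1) := by
    exact pow_lt_pow_right₀ (by norm_num) (by omega)
  linarith

lemma L3 {x y z w : ℕ} (hxy : x < y) (hyz : y < z) :
    (2:ℤ) ^ x + 2 ^ y + 2 ^ z ≠ 2 ^ w := by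
  intro h
  have hzw : z < w := two_pow_lt (by
    have h1 : (0:ℤ) < 2 ^ x := by positivity
    have h2 : (0:ℤ) < 2 ^ y := by positivity
    linarith)
  have d1 : (2:ℤ) ^ (x+1) ∣ 2 ^ y := pow_dvd_pow 2 hxy
  have d2 : (2:ℤ) ^ (x+1) ∣ 2 ^ z := pow_dvd_pow 2 (by omega)
  have d3 : (2:ℤ) ^ (x+1) ∣ 2 ^ w := pow_dvd_pow 2 (by omega)
  have d4 : (2:ℤ) ^ (x+1) ∣ 2 ^ x := by
    have : (2:ℤ) ^ x = 2 ^ w - 2 ^ y - 2 ^ z := by linarith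
    rw [this]; exact dvd_sub (dvd_sub d3 d1) d2
  have hle : (2:ℤ) ^ (x+1) ≤ 2 ^ x := Int.le_of_dvd (by positivity) d4
  have : (2:ℤ) ^ x < 2 ^ (x+1) := pow_lt_pow_right₀ (by norm_num) (by omega)
  linarith

lemma L1aux {a b c d : ℕ} (hab : a < b) (hcd : c < d) (hac : a < c)
    (h : (2:ℤ) ^ a + 2 ^ b = 2 ^ c + 2 ^ d) : False := by
  have d1 : (2:ℤ) ^ (a+1) ∣ 2 ^ b := pow_dvd_pow 2 hab
  have d2 : (2:ℤ) ^ (a+1) ∣ 2 ^ c := pow_dvd_pow 2 (by omega)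
  have d3 : (2:ℤ) ^ (a+1) ∣ 2 ^ d := pow_dvd_pow 2 (by omega)
  have d4 : (2:ℤ) ^ (a+1) ∣ 2 ^ a := by
    have : (2:ℤ) ^ a = 2 ^ c + 2 ^ d - 2 ^ b := by linarith
    rw [this]; exact dvd_sub (dvd_add d2 d3) d1
  have hle : (2:ℤ) ^ (a+1) ≤ 2 ^ a := Int.le_of_dvd (by positivity) d4
  have : (2:ℤ) ^ a < 2 ^ (a+1) := pow_lt_pow_right₀ (by norm_num) (by omega)
  linarith

lemma L1 {a b c d : ℕ} (hab : a < b) (hcd : c < d)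
    (h : (2:ℤ) ^ a + 2 ^ b = 2 ^ c + 2 ^ d) : a = c ∧ b = d := by
  rcases lt_trichotomy a c with hac | hac | hac
  · exact absurd (L1aux hab hcd hac h) (not_false)
  · subst hac
    refine ⟨rfl, powinj ?_⟩
    linarith
  · exact absurd (L1aux hcd hab hac h.symm) (not_false)

/-! ### The construction -/

section Construction

variable {H : Type u} [Group H] (e : ℕ → H)

def xfun (h : H) : ℤ → H := fun n => if 1 ≤ n then h ^ (-n) else 1

def wfun (h : H) : ℤ → H := fun n => if 1 ≤ n then h else 1

/-- The inner shift. -/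
def sInner : W H := inr (ofAdd 1)

lemma comm_s_x (h : H) :
    ⁅sInner (H := H), (inl (xfun h) : W H)⁆ = (inl (wfun h) : W H) := by
  have h1 : sInner (H := H) = (inr (ofAdd 1) : W H) ^ (1:ℤ) := by
    rw [zpow_one]; rfl
  rw [h1, W_comm_inr_inl]
  congr 1
  funext n
  simp only [Pi.mul_apply, Pi.inv_apply, xfun, wfun]
  rcases lt_trichotomy n 1 with hn | hn | hn
  · rw [if_neg (by omega), if_neg (by omega), if_neg (by omega), one_mul, inv_one]
  · subst hn
    norm_num
  · rw [if_pos (by omega), if_pos (by omega), if_pos (by omega), ← zpow_neg, ← zpow_add]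
    have h2 : -(n - 1) + - -n = 1 := by ring
    rw [h2, zpow_one]

lemma comm_w_s (h : H) :
    ⁅(inl (wfun h) : W H), sInner (H := H)⁆ = (inl (Pi.mulSingle (1:ℤ) h) : W H) := by
  have h1 : sInner (H := H) = (inr (ofAdd 1) : W H) ^ (1:ℤ) := by
    rw [zpow_one]; rfl
  rw [h1, W_comm_inl_inr]
  congr 1
  funext n
  simp only [Pi.mul_apply, Pi.inv_apply, wfun]
  rcases lt_trichotomy n 1 with hn | hn | hn
  · rw [if_neg (by omega), if_neg (by omega), one_mul, inv_one,
      Pi.mulSingle_apply, if_neg (by omega)]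
  · subst hn
    rw [if_pos le_rfl, if_neg (by omega), inv_one, mul_one, Pi.mulSingle_apply, if_pos rfl]
  · rw [if_pos (by omega), if_pos (by omega), mul_inv_cancel, Pi.mulSingle_apply,
      if_neg (by omega)]

/-- The recipe function defining the second generator. -/
def BB : ℤ → W H := fun u =>
  if 0 < u ∧ u = (2:ℤ) ^ (Nat.log 2 u.toNat) ∧ Nat.log 2 u.toNat % 4 = 2 then
    inl (xfun (e (Nat.log 2 u.toNat / 4)))
  else if u < 0 ∧ -u = (2:ℤ) ^ (Nat.log 2 (-u).toNat) ∧ Nat.log 2 (-u).toNat % 4 = 0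
      ∧ 4 ≤ Nat.log 2 (-u).toNat then
    inr (ofAdd 1)
  else 1

lemma B_cases (u : ℤ) :
    BB e u = 1 ∨
    (u < 0 ∧ ∃ j : ℕ, u = -((2:ℤ) ^ (4*j+4)) ∧ BB e u = inr (ofAdd 1)) ∨
    (0 < u ∧ ∃ i : ℕ, u = (2:ℤ) ^ (4*i+2) ∧ BB e u = inl (xfun (e i))) := by
  unfold BB
  by_cases h1 : 0 < u ∧ u = (2:ℤ) ^ (Nat.log 2 u.toNat) ∧ Nat.log 2 u.toNat % 4 = 2
  · obtain ⟨hu0, hupow, hmod⟩ := h1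
    refine Or.inr (Or.inr ⟨hu0, Nat.log 2 u.toNat / 4, ?_, ?_⟩)
    · set t := Nat.log 2 u.toNat with ht
      have harg : 4 * (t / 4) + 2 = t := by omega
      rw [harg]
      exact hupow
    · rw [if_pos ⟨hu0, hupow, hmod⟩]
  · by_cases h2 : u < 0 ∧ -u = (2:ℤ) ^ (Nat.log 2 (-u).toNat) ∧ Nat.log 2 (-u).toNat % 4 = 0
      ∧ 4 ≤ Nat.log 2 (-u).toNat
    · obtain ⟨hu0, hupow, hmod, hge⟩ := h2
      refine Or.inr (Or.inl ⟨hu0, Nat.log 2 (-u).toNat / 4 - 1, ?_, ?_⟩)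
      · set t := Nat.log 2 (-u).toNat with ht
        have harg : 4 * (t / 4 - 1) + 4 = t := by omega
        rw [harg]
        linarith
      · rw [if_neg h1, if_pos ⟨hu0, hupow, hmod, hge⟩]
    · left
      rw [if_neg h1, if_neg h2]

lemma B_at_x (m : ℕ) : BB e ((2:ℤ) ^ (4*m+2)) = inl (xfun (e m)) := by
  have htn : ((2:ℤ) ^ (4*m+2)).toNat = 2 ^ (4*m+2) := by
    rw [show (2:ℤ) ^ (4*m+2) = ((2 ^ (4*m+2) : ℕ) : ℤ) by push_cast; ring]
    exact Int.toNat_natCast _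
  have hlog : Nat.log 2 ((2:ℤ) ^ (4*m+2)).toNat = 4*m+2 := by
    rw [htn]; exact Nat.log_pow (by norm_num) _
  unfold BB
  rw [if_pos ⟨by positivity, by rw [hlog], by rw [hlog]; omega⟩, hlog]
  have : (4*m+2)/4 = m := by omega
  rw [this]

lemma B_at_y (m : ℕ) : BB e (-((2:ℤ) ^ (4*m+4))) = inr (ofAdd 1) := by
  have htn : (-(-((2:ℤ) ^ (4*m+4)))).toNat = 2 ^ (4*m+4) := by
    rw [neg_neg, show (2:ℤ) ^ (4*m+4) = ((2 ^ (4*m+4) : ℕ) : ℤ) by push_cast; ring]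
    exact Int.toNat_natCast _
  have hlog : Nat.log 2 (-(-((2:ℤ) ^ (4*m+4)))).toNat = 4*m+4 := by
    rw [htn]; exact Nat.log_pow (by norm_num) _
  have hneg : -((2:ℤ) ^ (4*m+4)) < 0 := by
    have : (0:ℤ) < 2 ^ (4*m+4) := by positivity
    linarith
  unfold BB
  rw [if_neg, if_pos ⟨hneg, by rw [hlog, neg_neg], by rw [hlog]; omega, by rw [hlog]; omega⟩]
  rintro ⟨hpos, -⟩
  linarith

lemma B_zero : BB e 0 = 1 := by
  rcases B_cases e 0 with h | ⟨h, -⟩ | ⟨h, -⟩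
  · exact h
  · exact absurd h (by norm_num)
  · exact absurd h (by norm_num)

lemma key1 (m : ℕ) (n : ℤ) (hn : n ≠ 0) :
    ⁅BB e (n - (2:ℤ) ^ (4*m+4)), BB e (n + (2:ℤ) ^ (4*m+2))⁆ = 1 := by
  set u := n - (2:ℤ) ^ (4*m+4) with hu
  set v := n + (2:ℤ) ^ (4*m+2) with hv
  rcases B_cases e u with hB | ⟨hun, j, huj, hBu⟩ | ⟨hup, i, hui, hBu⟩
  · rw [hB]; simp [commutatorElement_def]
  · rcases B_cases e v with hB | ⟨hvn, j', hvj, hBv⟩ | ⟨hvp, i', hvi, hBv⟩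
    · rw [hB]; simp [commutatorElement_def]
    · -- both s
      rw [hBu, hBv]
      simp [commutatorElement_def]
    · -- s, x : forced to n = 0
      exfalso
      have heq : (2:ℤ) ^ (4*i'+2) + 2 ^ (4*j+4) = 2 ^ (4*m+2) + 2 ^ (4*m+4) := by
        have : v - u = (2:ℤ) ^ (4*m+4) + 2 ^ (4*m+2) := by rw [hu, hv]; ring
        rw [huj, hvi] at this
        linarith
      rcases le_or_gt i' j with hij | hij
      · have := L1 (a := 4*i'+2) (b := 4*j+4) (c := 4*m+2) (d := 4*m+4)
          (by omega) (by omega) heq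
        have hi' : i' = m := by omega
        have hj : j = m := by omega
        apply hn
        have h0 : u = -((2:ℤ) ^ (4*m+4)) := by rw [huj, hj]
        rw [hu] at h0
        linarith
      · have := L1 (a := 4*j+4) (b := 4*i'+2) (c := 4*m+2) (d := 4*m+4)
          (by omega) (by omega) (by linarith)
        omega
  · rcases B_cases e v with hB | ⟨hvn, j', hvj, hBv⟩ | ⟨hvp, i', hvi, hBv⟩
    · rw [hB]; simp [commutatorElement_def]
    · -- x, s : impossible by sign
      exfalso
      have : v - u = (2:ℤ) ^ (4*m+4) + 2 ^ (4*m+2) := by rw [hu, hv]; ring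
      have h1 : (0:ℤ) < 2 ^ (4*m+4) := by positivity
      have h2 : (0:ℤ) < 2 ^ (4*m+2) := by positivity
      linarith
    · -- x, x : impossible by arithmetic
      exfalso
      have heq : (2:ℤ) ^ (4*i'+2) = 2 ^ (4*i+2) + 2 ^ (4*m+2) + 2 ^ (4*m+4) := by
        have : v - u = (2:ℤ) ^ (4*m+4) + 2 ^ (4*m+2) := by rw [hu, hv]; ring
        rw [hui, hvi] at this
        linarith
      rcases lt_trichotomy i m with him | him | him
      · exact L3 (x := 4*i+2) (y := 4*m+2) (z := 4*m+4) (by omega) (by omega) heq.symm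
      · subst him
        have hps : (2:ℤ) ^ (4*i+2) + 2 ^ (4*i+2) = 2 ^ (4*i+3) := by
          have h3 : 4*i+3 = (4*i+2)+1 := by omega
          rw [h3, pow_succ]; ring
        exact L2 (x := 4*i+3) (y := 4*i+4) (by omega) (w := 4*i'+2) (by linarith)
      · exact L3 (x := 4*m+2) (y := 4*m+4) (z := 4*i+2) (by omega) (by omega)
          (by linarith)


/-! ### The two generators and the master computation -/

/-- The first generator: the outer shift. -/
abbrev aa : W (W H) := inr (ofAdd 1)

/-- The second generator. -/
abbrev bb : W (W H) := inl (BB e)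

/-- The embedding of `H` into the double wreath product, at position `(0,1)`. -/
def Ehom : H →* W (W H) :=
  inl.comp ((MonoidHom.mulSingle (fun _ : ℤ => W H) 0).comp
    (inl.comp (MonoidHom.mulSingle (fun _ : ℤ => H) 1)))

lemma Ehom_apply (h : H) :
    Ehom h = (inl (Pi.mulSingle (0:ℤ) (inl (Pi.mulSingle (1:ℤ) h))) : W (W H)) := rfl

lemma Ehom_injective : Function.Injective (Ehom : H →* W (W H)) := by
  intro x y hxy
  rw [Ehom_apply, Ehom_apply] at hxy
  have h1 := inl_injective hxy
  have h2 := Pi.mulSingle_injective (0:ℤ) h1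
  have h3 := inl_injective h2
  exact Pi.mulSingle_injective (1:ℤ) h3

lemma c1_eq (m : ℕ) :
    ⁅aa ^ ((2:ℤ)^(4*m+4)) * bb e * aa ^ (-((2:ℤ)^(4*m+4))),
      aa ^ (-((2:ℤ)^(4*m+2))) * bb e * aa ^ ((2:ℤ)^(4*m+2))⁆
      = (inl (Pi.mulSingle (0:ℤ) (inl (wfun (e m)))) : W (W H)) := by
  have h1 : aa ^ ((2:ℤ)^(4*m+4)) * bb e * aa ^ (-((2:ℤ)^(4*m+4)))
      = (inl (fun n => BB e (n - (2:ℤ)^(4*m+4))) : W (W H)) := by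
    rw [zpow_neg]
    exact W_conj _ _
  have h2 : aa ^ (-((2:ℤ)^(4*m+2))) * bb e * aa ^ ((2:ℤ)^(4*m+2))
      = (inl (fun n => BB e (n + (2:ℤ)^(4*m+2))) : W (W H)) := by
    conv_lhs => rw [show aa ^ ((2:ℤ)^(4*m+2))
      = ((aa : W (W H)) ^ (-((2:ℤ)^(4*m+2))))⁻¹ by rw [zpow_neg, inv_inv]]
    rw [W_conj]
    congr 1
    funext n
    rw [sub_neg_eq_add]
  rw [h1, h2, W_comm_inl]
  congr 1
  funext n
  by_cases hn : n = 0
  · subst hn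
    rw [zero_sub, zero_add, B_at_y, B_at_x, Pi.mulSingle_apply, if_pos rfl]
    exact comm_s_x (e m)
  · rw [Pi.mulSingle_apply, if_neg hn]
    exact key1 e m n hn

set_option maxRecDepth 10000 in
lemma X2_eq : ⁅(aa : W (W H)) ^ (16:ℤ), bb e⁆
    = (inl ((fun n => BB e (n - 16)) * (BB e)⁻¹) : W (W H)) := by
  exact W_comm_inr_inl 16 (BB e)

lemma X2_at_zero : ((fun n => BB e (n - 16)) * (BB e)⁻¹) 0 = sInner (H := H) := by
  have h16 : ((0:ℤ) - 16) = -((2:ℤ)^(4*0+4)) := by norm_num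
  simp only [Pi.mul_apply, Pi.inv_apply]
  rw [h16, B_at_y, B_zero, inv_one, mul_one]
  rfl

lemma master (m : ℕ) :
    ⁅⁅aa ^ ((2:ℤ)^(4*m+4)) * bb e * aa ^ (-((2:ℤ)^(4*m+4))),
        aa ^ (-((2:ℤ)^(4*m+2))) * bb e * aa ^ ((2:ℤ)^(4*m+2))⁆,
      ⁅(aa : W (W H)) ^ (16:ℤ), bb e⁆⁆ = Ehom (e m) := by
  rw [c1_eq, X2_eq, W_comm_inl, Ehom_apply]
  congr 1
  funext n
  by_cases hn : n = 0
  · subst hn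
    rw [Pi.mulSingle_apply, if_pos rfl, Pi.mulSingle_apply, if_pos rfl, X2_at_zero]
    exact comm_w_s (e m)
  · rw [Pi.mulSingle_apply, if_neg hn, Pi.mulSingle_apply, if_neg hn]
    simp only [commutatorElement_def]
    group


/-! ### The subnormal chain subgroups -/

lemma right_conj {K : Type u} [Group K] {g x : W K} (hx : x.right = 1) :
    (g * x * g⁻¹).right = 1 := by
  simp [hx]

lemma left_conj {K : Type u} [Group K] {g x : W K} (hg : g.right = 1) (hx : x.right = 1) :
    (g * x * g⁻¹).left = g.left * x.left * g.left⁻¹ := by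
  rw [left_mul_of_right_one (by simp [hg, hx]), left_mul_of_right_one hg,
    left_inv_of_right_one hg]

def C3' : Subgroup (W (W H)) where
  carrier := {g | g.right = 1}
  one_mem' := rfl
  mul_mem' {g h} hg hh := by
    show (g * h).right = 1
    rw [mul_right, hg, hh, one_mul]
  inv_mem' {g} hg := by
    show (g⁻¹).right = 1
    rw [inv_right, hg, inv_one]

def C2' : Subgroup (W (W H)) where
  carrier := {g | g.right = 1 ∧ ∀ n : ℤ, n ≠ 0 → g.left n = 1}
  one_mem' := ⟨rfl, fun _ _ => rfl⟩
  mul_mem' {g h} hg hh := by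
    refine ⟨by rw [mul_right, hg.1, hh.1, one_mul], fun n hn => ?_⟩
    rw [left_mul_of_right_one hg.1, Pi.mul_apply, hg.2 n hn, hh.2 n hn, one_mul]
  inv_mem' {g} hg := by
    refine ⟨by rw [inv_right, hg.1, inv_one], fun n hn => ?_⟩
    rw [left_inv_of_right_one hg.1, Pi.inv_apply, hg.2 n hn, inv_one]

def C1' : Subgroup (W (W H)) where
  carrier := {g | (g.right = 1 ∧ ∀ n : ℤ, n ≠ 0 → g.left n = 1) ∧ (g.left 0).right = 1}
  one_mem' := ⟨⟨rfl, fun _ _ => rfl⟩, rfl⟩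
  mul_mem' {g h} hg hh := by
    refine ⟨C2'.mul_mem hg.1 hh.1, ?_⟩
    rw [left_mul_of_right_one hg.1.1, Pi.mul_apply, mul_right, hg.2, hh.2, one_mul]
  inv_mem' {g} hg := by
    refine ⟨C2'.inv_mem hg.1, ?_⟩
    rw [left_inv_of_right_one hg.1.1, Pi.inv_apply, inv_right, hg.2, inv_one]

def C0' : Subgroup (W (W H)) where
  carrier := {g | ((g.right = 1 ∧ ∀ n : ℤ, n ≠ 0 → g.left n = 1) ∧ (g.left 0).right = 1) ∧
    ∀ k : ℤ, k ≠ 1 → (g.left 0).left k = 1}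
  one_mem' := ⟨⟨⟨rfl, fun _ _ => rfl⟩, rfl⟩, fun _ _ => rfl⟩
  mul_mem' {g h} hg hh := by
    refine ⟨C1'.mul_mem hg.1 hh.1, fun k hk => ?_⟩
    rw [left_mul_of_right_one hg.1.1.1, Pi.mul_apply, left_mul_of_right_one hg.1.2,
      Pi.mul_apply, hg.2 k hk, hh.2 k hk, one_mul]
  inv_mem' {g} hg := by
    refine ⟨C1'.inv_mem hg.1, fun k hk => ?_⟩
    rw [left_inv_of_right_one hg.1.1.1, Pi.inv_apply, left_inv_of_right_one hg.1.2,
      Pi.inv_apply, hg.2 k hk, inv_one]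

lemma C0'_le_C1' : (C0' : Subgroup (W (W H))) ≤ C1' := fun _ hg => hg.1

lemma C1'_le_C2' : (C1' : Subgroup (W (W H))) ≤ C2' := fun _ hg => hg.1

lemma C2'_le_C3' : (C2' : Subgroup (W (W H))) ≤ C3' := fun _ hg => hg.1

lemma conj_mem_C3' {g x : W (W H)} (hx : x ∈ C3') : g * x * g⁻¹ ∈ C3' :=
  right_conj hx

lemma conj_mem_C2' {g x : W (W H)} (hg : g ∈ C3') (hx : x ∈ C2') : g * x * g⁻¹ ∈ C2' := by
  refine ⟨right_conj hx.1, fun n hn => ?_⟩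
  rw [left_conj hg hx.1, Pi.mul_apply, Pi.mul_apply, Pi.inv_apply, hx.2 n hn]
  group

lemma conj_mem_C1' {g x : W (W H)} (hg : g ∈ C2') (hx : x ∈ C1') : g * x * g⁻¹ ∈ C1' := by
  refine ⟨conj_mem_C2' (C2'_le_C3' hg) hx.1, ?_⟩
  rw [left_conj hg.1 hx.1.1, Pi.mul_apply, Pi.mul_apply, Pi.inv_apply,
    mul_right, mul_right, inv_right, hx.2]
  group

lemma conj_mem_C0' {g x : W (W H)} (hg : g ∈ C1') (hx : x ∈ C0') : g * x * g⁻¹ ∈ C0' := by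
  refine ⟨conj_mem_C1' hg.1 hx.1, fun k hk => ?_⟩
  rw [left_conj hg.1.1 hx.1.1.1, Pi.mul_apply, Pi.mul_apply, Pi.inv_apply,
    left_mul_of_right_one (by rw [mul_right, hg.2, hx.1.2, one_mul]),
    left_mul_of_right_one hg.2, left_inv_of_right_one hg.2,
    Pi.mul_apply, Pi.mul_apply, Pi.inv_apply, hx.2 k hk]
  group

lemma mem_C0'_iff {g : W (W H)} : g ∈ C0' ↔ ∃ h : H, g = Ehom h := by
  constructor
  · rintro ⟨⟨⟨hr, hsupp⟩, hir⟩, hik⟩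
    refine ⟨(g.left 0).left 1, ?_⟩
    rw [Ehom_apply]
    refine SemidirectProduct.ext ?_ (by rw [hr, right_inl])
    funext n
    rw [left_inl]
    by_cases hn : n = 0
    · subst hn
      rw [Pi.mulSingle_apply, if_pos rfl]
      refine SemidirectProduct.ext ?_ (by rw [hir, right_inl])
      funext k
      rw [left_inl]
      by_cases hk : k = 1
      · subst hk
        rw [Pi.mulSingle_apply, if_pos rfl]
      · rw [hik k hk, Pi.mulSingle_apply, if_neg hk]
    · rw [hsupp n hn, Pi.mulSingle_apply, if_neg hn]
  · rintro ⟨h, rfl⟩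
    rw [Ehom_apply]
    refine ⟨⟨⟨rfl, fun n hn => ?_⟩, ?_⟩, fun k hk => ?_⟩
    · rw [left_inl, Pi.mulSingle_apply, if_neg hn]
    · rw [left_inl, Pi.mulSingle_apply, if_pos rfl]; rfl
    · rw [left_inl, Pi.mulSingle_apply, if_pos rfl, left_inl, Pi.mulSingle_apply, if_neg hk]

/-- The subgroup of "functions `ℤ × ℤ → H`": everything with trivial shift components. -/
def NN' : Subgroup (W (W H)) where
  carrier := {g | g.right = 1 ∧ ∀ n : ℤ, (g.left n).right = 1}
  one_mem' := ⟨rfl, fun _ => rfl⟩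
  mul_mem' {g h} hg hh := by
    refine ⟨by rw [mul_right, hg.1, hh.1, one_mul], fun n => ?_⟩
    rw [left_mul_of_right_one hg.1, Pi.mul_apply, mul_right, hg.2 n, hh.2 n, one_mul]
  inv_mem' {g} hg := by
    refine ⟨by rw [inv_right, hg.1, inv_one], fun n => ?_⟩
    rw [left_inv_of_right_one hg.1, Pi.inv_apply, inv_right, hg.2 n, inv_one]


/-! ### Commutators of elements with trivial shift component -/

lemma comm_left {K : Type u} [Group K] {g h : W K} (hg : g.right = 1) (hh : h.right = 1) :
    (⁅g, h⁆).left = ⁅g.left, h.left⁆ := by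
  rw [commutatorElement_def, commutatorElement_def,
    left_mul_of_right_one (K := K) (g := g * h * g⁻¹) (by simp [hg, hh]),
    left_mul_of_right_one (K := K) (g := g * h) (by simp [hg, hh]),
    left_mul_of_right_one hg, left_inv_of_right_one hg, left_inv_of_right_one hh]

lemma comm_right {K : Type u} [Group K] (g h : W K) :
    (⁅g, h⁆).right = ⁅g.right, h.right⁆ :=
  map_commutatorElement (rightHom : W K →* Multiplicative ℤ) g h

lemma mult_comm_triv (x y : Multiplicative ℤ) : ⁅x, y⁆ = 1 := by
  rw [commutatorElement_def, mul_comm x y]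
  group

/-! ### The two-generated group -/


/-- Our two generated group, as a subgroup of the double wreath product. -/
def SG : Subgroup (W (W H)) := Subgroup.closure {aa, bb e}

lemma aa_mem : (aa : W (W H)) ∈ SG e :=
  Subgroup.subset_closure (Set.mem_insert _ _)

lemma bb_mem : (bb e : W (W H)) ∈ SG e :=
  Subgroup.subset_closure (Set.mem_insert_of_mem _ rfl)

/-- The generators as elements of `SG`. -/
def aS : ↥(SG e) := ⟨aa, aa_mem e⟩

def bS : ↥(SG e) := ⟨bb e, bb_mem e⟩

/-- The element of `SG` realizing `Ehom (e m)`. -/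
def tS (m : ℕ) : ↥(SG e) :=
  ⁅⁅aS e ^ ((2:ℤ)^(4*m+4)) * bS e * aS e ^ (-((2:ℤ)^(4*m+4))),
      aS e ^ (-((2:ℤ)^(4*m+2))) * bS e * aS e ^ ((2:ℤ)^(4*m+2))⁆,
    ⁅aS e ^ (16:ℤ), bS e⁆⁆

set_option maxRecDepth 40000 in
lemma coe_tS (m : ℕ) : ((tS e m : ↥(SG e)) : W (W H)) = Ehom (e m) := by
  rw [← master e m]
  simp only [tS, commutatorElement_def]
  push_cast [aS, bS]
  rfl

lemma tS_mem_derived (m : ℕ) : tS e m ∈ derivedSeries ↥(SG e) 2 := by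
  have h1 : derivedSeries ↥(SG e) 1 = ⁅(⊤ : Subgroup ↥(SG e)), ⊤⁆ := by
    rw [show (1:ℕ) = 0 + 1 from rfl, derivedSeries_succ, derivedSeries_zero]
  have h2 : derivedSeries ↥(SG e) 2 = ⁅derivedSeries ↥(SG e) 1, derivedSeries ↥(SG e) 1⁆ := by
    rw [show (2:ℕ) = 1 + 1 from rfl, derivedSeries_succ]
  rw [h2]
  exact Subgroup.commutator_mem_commutator
    (h1 ▸ Subgroup.commutator_mem_commutator (Subgroup.mem_top _) (Subgroup.mem_top _))
    (h1 ▸ Subgroup.commutator_mem_commutator (Subgroup.mem_top _) (Subgroup.mem_top _))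

lemma Ehom_mem (he : Function.Surjective e) (h : H) : Ehom h ∈ SG e := by
  obtain ⟨m, rfl⟩ := he h
  rw [← coe_tS e m]
  exact SetLike.coe_mem _

/-! ### The second derived subgroup lands in `NN'` -/

lemma derived_one_le_C3' : derivedSeries (W (W H)) 1 ≤ C3' := by
  rw [show (1:ℕ) = 0 + 1 from rfl, derivedSeries_succ, derivedSeries_zero,
    Subgroup.commutator_le]
  intro g _ h _
  show (⁅g, h⁆).right = 1
  rw [comm_right, mult_comm_triv]

lemma derived_two_le_NN' : derivedSeries (W (W H)) 2 ≤ NN' := by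
  rw [show (2:ℕ) = 1 + 1 from rfl, derivedSeries_succ]
  refine le_trans (Subgroup.commutator_mono derived_one_le_C3' derived_one_le_C3') ?_
  rw [Subgroup.commutator_le]
  intro g hg h hh
  refine ⟨by rw [comm_right, mult_comm_triv], fun n => ?_⟩
  have hl : (⁅g, h⁆).left = ⁅g.left, h.left⁆ := comm_left hg hh
  rw [hl]
  show (⁅g.left n, h.left n⁆).right = 1
  rw [comm_right, mult_comm_triv]

lemma derived_sub_mem_NN' {g : ↥(SG e)} (hg : g ∈ derivedSeries ↥(SG e) 2) :
    (g : W (W H)) ∈ NN' :=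
  derived_two_le_NN' (map_derivedSeries_le_derivedSeries (SG e).subtype 2
    (Subgroup.mem_map_of_mem _ hg))

/-! ### The evaluation homomorphism on the second derived subgroup -/

/-- Coordinatewise evaluation `G'' → (ℤ → ℤ → H)`. -/
def iota : ↥(derivedSeries ↥(SG e) 2) →* (ℤ → ℤ → H) where
  toFun g := fun p q => (((g : ↥(SG e)) : W (W H)).left p).left q
  map_one' := rfl
  map_mul' g h := by
    funext p q
    have hg : ((g : ↥(SG e)) : W (W H)) ∈ NN' := derived_sub_mem_NN' e g.2
    have hh : ((h : ↥(SG e)) : W (W H)) ∈ NN' := derived_sub_mem_NN' e h.2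
    show ((((g * h : ↥(derivedSeries ↥(SG e) 2)) : ↥(SG e)) : W (W H)).left p).left q = _
    have hcoe : (((g * h : ↥(derivedSeries ↥(SG e) 2)) : ↥(SG e)) : W (W H))
        = ((g : ↥(SG e)) : W (W H)) * ((h : ↥(SG e)) : W (W H)) := rfl
    rw [hcoe, left_mul_of_right_one hg.1, Pi.mul_apply,
      left_mul_of_right_one (hg.2 p), Pi.mul_apply]
    rfl

lemma iota_injective : Function.Injective (iota e) := by
  intro g h hgh
  have hg : ((g : ↥(SG e)) : W (W H)) ∈ NN' := derived_sub_mem_NN' e g.2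
  have hh : ((h : ↥(SG e)) : W (W H)) ∈ NN' := derived_sub_mem_NN' e h.2
  have : ((g : ↥(SG e)) : W (W H)) = ((h : ↥(SG e)) : W (W H)) := by
    refine SemidirectProduct.ext ?_ (by rw [hg.1, hh.1])
    funext p
    refine SemidirectProduct.ext ?_ (by rw [hg.2 p, hh.2 p])
    funext q
    exact congrFun (congrFun hgh p) q
  exact Subtype.ext (Subtype.ext this)

lemma laws_hold (U : Set (FreeGroup ℕ)) (hHU : SatisfiesLaws H U) :
    SatisfiesLaws ↥(derivedSeries ↥(SG e) 2) U := by
  intro φ w hw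
  apply iota_injective e
  rw [map_one]
  funext p q
  exact hHU (((Pi.evalMonoidHom (fun _ : ℤ => H) q).comp
    ((Pi.evalMonoidHom (fun _ : ℤ => (ℤ → H)) p).comp ((iota e).comp φ)))) w hw

/-! ### The subnormal chain -/

lemma helperNormal {G₂ : Type u} [Group G₂] {A B : Subgroup G₂} (S : Subgroup G₂)
    (hconj : ∀ g ∈ B, ∀ x ∈ A, g * x * g⁻¹ ∈ A) :
    ((A.subgroupOf S).subgroupOf (B.subgroupOf S)).Normal := by
  constructor
  intro x hx g
  rw [Subgroup.mem_subgroupOf, Subgroup.mem_subgroupOf] at hx ⊢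
  have hgB : ((g : ↥S) : G₂) ∈ B := (Subgroup.mem_subgroupOf).mp g.2
  exact hconj _ hgB _ hx

lemma htilde_le_derived (he : Function.Surjective e) {g : ↥(SG e)} (hg : g ∈ C0'.subgroupOf (SG e)) :
    g ∈ derivedSeries ↥(SG e) 2 := by
  rw [Subgroup.mem_subgroupOf] at hg
  obtain ⟨h, hgh⟩ := mem_C0'_iff.mp hg
  obtain ⟨m, rfl⟩ := he h
  have : g = tS e m := Subtype.ext (by rw [hgh, ← coe_tS e m])
  rw [this]
  exact tS_mem_derived e m


/-! ### The isomorphism onto the embedded copy of `H` -/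

def PsiHom (he : Function.Surjective e) : H →* ↥(C0'.subgroupOf (SG e)) where
  toFun h := ⟨⟨Ehom h, Ehom_mem e he h⟩, by
    rw [Subgroup.mem_subgroupOf]
    exact mem_C0'_iff.mpr ⟨h, rfl⟩⟩
  map_one' := Subtype.ext (Subtype.ext (map_one Ehom))
  map_mul' x y := Subtype.ext (Subtype.ext (map_mul Ehom x y))

lemma PsiHom_bijective (he : Function.Surjective e) : Function.Bijective (PsiHom e he) := by
  constructor
  · intro x y hxy
    exact Ehom_injective (congrArg Subtype.val (congrArg Subtype.val hxy))
  · rintro ⟨x, hx⟩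
    rw [Subgroup.mem_subgroupOf] at hx
    obtain ⟨h, hh⟩ := mem_C0'_iff.mp hx
    exact ⟨h, Subtype.ext (Subtype.ext hh.symm)⟩

noncomputable def PsiEquiv (he : Function.Surjective e) : H ≃* ↥(C0'.subgroupOf (SG e)) :=
  MulEquiv.ofBijective (PsiHom e he) (PsiHom_bijective e he)

/-! ### The subnormal chain -/

lemma chain_subnormal : IsSubnormalSubgroup (C0'.subgroupOf (SG e)) := by
  refine ⟨4, ![C0'.subgroupOf (SG e), C1'.subgroupOf (SG e), C2'.subgroupOf (SG e),
    C3'.subgroupOf (SG e), (⊤ : Subgroup (W (W H))).subgroupOf (SG e)], rfl, ?_, ?_⟩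
  · show (⊤ : Subgroup (W (W H))).subgroupOf (SG e) = ⊤
    exact Subgroup.top_subgroupOf _
  · intro i
    fin_cases i
    · refine ⟨fun g hg => ?_, helperNormal (SG e) (fun g hg x hx => conj_mem_C0' hg hx)⟩
      have hg' : (g : W (W H)) ∈ C0' := hg
      show (g : W (W H)) ∈ C1'
      exact C0'_le_C1' hg'
    · refine ⟨fun g hg => ?_, helperNormal (SG e) (fun g hg x hx => conj_mem_C1' hg hx)⟩
      have hg' : (g : W (W H)) ∈ C1' := hg
      show (g : W (W H)) ∈ C2'
      exact C1'_le_C2' hg'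
    · refine ⟨fun g hg => ?_, helperNormal (SG e) (fun g hg x hx => conj_mem_C2' hg hx)⟩
      have hg' : (g : W (W H)) ∈ C2' := hg
      show (g : W (W H)) ∈ C3'
      exact C2'_le_C3' hg'
    · refine ⟨fun g hg => ?_, helperNormal (SG e) (fun g _ x hx => conj_mem_C3' hx)⟩
      show (g : W (W H)) ∈ (⊤ : Subgroup (W (W H)))
      exact Subgroup.mem_top _

lemma two_generated : Subgroup.closure {aS e, bS e} = (⊤ : Subgroup ↥(SG e)) := by
  have hset : ({aS e, bS e} : Set ↥(SG e))
      = ((↑) : ↥(SG e) → W (W H)) ⁻¹' {aa, bb e} := by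
    ext x
    simp only [Set.mem_preimage, Set.mem_insert_iff, Set.mem_singleton_iff, aS, bS]
    constructor
    · rintro (rfl | rfl)
      · left; rfl
      · right; rfl
    · rintro (hx | hx)
      · left; exact Subtype.ext hx
      · right; exact Subtype.ext hx
  rw [hset]
  exact Subgroup.closure_closure_coe_preimage

end Construction

end NeumannEmbedding

theorem subnormal_embedding_into_two_generated_UA2
    {H : Type u} [Group H] (hH : Countable H)
    (U : Set (FreeGroup ℕ)) (hHU : SatisfiesLaws H U) :
    ∃ G : GrpCat.{u}, (∃ a b : ↥G, Subgroup.closure {a, b} = ⊤) ∧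
      SatisfiesLaws ↥(derivedSeries ↥G 2) U ∧
      ∃ Htilde : Subgroup ↥G, IsSubnormalSubgroup Htilde ∧ Nonempty (H ≃* ↥Htilde) ∧
        Htilde ≤ derivedSeries ↥G 2 := by
  have : Countable H := hH
  have : Nonempty H := ⟨1⟩
  obtain ⟨e, he⟩ := exists_surjective_nat H
  exact ⟨GrpCat.of ↥(NeumannEmbedding.SG e), ⟨NeumannEmbedding.aS e, NeumannEmbedding.bS e,
    NeumannEmbedding.two_generated e⟩, NeumannEmbedding.laws_hold e U hHU,
    NeumannEmbedding.C0'.subgroupOf (NeumannEmbedding.SG e), NeumannEmbedding.chain_subnormal e,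
    ⟨NeumannEmbedding.PsiEquiv e he⟩,
    fun g hg => NeumannEmbedding.htilde_le_derived e he hg⟩
end

section
/- Let H be a countable solvable group of derived length l (the least l with the l-th term of the derived series of H trivial). Then there exists a solvable group G generated by two elements, of derived length at most l + 2, which has a subnormal subgroup H̃ isomorphic to H. -/
universe u

universe v

namespace NNproof

open SemidirectProduct Subgroup
open scoped commutatorElement

variable {M : Type*} [Group M]

/-- single point function as a hom -/
def ptHom : M →* (ℤ → M) where
  toFun g := fun j => if j = 0 then g else 1
  map_one' := by funext j; simp
  map_mul' a b := by funext j; by_cases h : j = 0 <;> simp [h]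

lemma ptHom_apply (g : M) (j : ℤ) : ptHom g j = if j = 0 then g else 1 := rfl

def stepFun (g : M) : ℤ → M := fun j => if 0 ≤ j then g else 1

lemma stepFun_one : stepFun (1 : M) = 1 := by
  funext j; simp [stepFun]

def shiftEquiv (M : Type v) [Group M] (m : ℤ) : (ℤ → M) ≃* (ℤ → M) where
  toFun f := fun j => f (j - m)
  invFun f := fun j => f (j + m)
  left_inv f := by funext j; simp
  right_inv f := by funext j; simp
  map_mul' f g := rfl

def shiftAct (M : Type v) [Group M] : Multiplicative ℤ →* MulAut (ℤ → M) :=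
  MonoidHom.mk' (fun m => shiftEquiv M m.toAdd) (by
    intro a b
    ext f j
    show f (j - (a.toAdd + b.toAdd)) = f (j - a.toAdd - b.toAdd)
    rw [sub_sub])

lemma shiftAct_apply (m : Multiplicative ℤ) (f : ℤ → M) (j : ℤ) :
    shiftAct M m f j = f (j - m.toAdd) := rfl

abbrev Wr (M : Type v) [Group M] : Type v :=
  (ℤ → M) ⋊[shiftAct M] Multiplicative ℤ

lemma eq_inl_of_right_one (a : Wr M) (ha : a.right = 1) : a = inl a.left := by
  ext <;> simp [ha]

lemma inl_commutator (u v : ℤ → M) :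
    ⁅(inl u : Wr M), (inl v : Wr M)⁆ = (inl ⁅u, v⁆ : Wr M) := by
  simp only [commutatorElement_def, ← map_mul, ← map_inv]

lemma pi_commutator_apply (u v : ℤ → M) (j : ℤ) : ⁅u, v⁆ j = ⁅u j, v j⁆ := rfl

lemma commutator_right (a b : Wr M) : (⁅a, b⁆).right = 1 := by
  have h1 : (rightHom ⁅a, b⁆ : Multiplicative ℤ) = ⁅rightHom a, rightHom b⁆ :=
    map_commutatorElement _ _ _
  have h2 : (⁅rightHom a, rightHom b⁆ : Multiplicative ℤ) = 1 :=
    commutatorElement_eq_one_iff_mul_comm.mpr (mul_comm _ _)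
  have : (rightHom ⁅a, b⁆ : Multiplicative ℤ) = 1 := h1.trans h2
  exact this

lemma commutator_of_right_one (a b : Wr M) (ha : a.right = 1) (hb : b.right = 1) :
    ⁅a, b⁆ = inl ⁅a.left, b.left⁆ := by
  rw [eq_inl_of_right_one a ha, eq_inl_of_right_one b hb, inl_commutator]
  simp

/-- the key single-level computation: commutator of a step function with the shift
is a point function. -/
lemma step_comm (g : M) :
    ⁅(inl (stepFun g) : Wr M), (inr (Multiplicative.ofAdd (1:ℤ)) : Wr M)⁆ = (inl (ptHom g) : Wr M) := by
  have h2 : (inr (Multiplicative.ofAdd (1:ℤ)) : Wr M) * (inl (stepFun g))⁻¹ *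
      (inr (Multiplicative.ofAdd (1:ℤ)))⁻¹ =
      inl (shiftAct M (Multiplicative.ofAdd (1:ℤ)) (stepFun g)⁻¹) := by
    rw [← map_inv, ← map_inv]
    exact (inl_aut _ _).symm
  rw [commutatorElement_def]
  calc (inl (stepFun g) : Wr M) * inr (Multiplicative.ofAdd (1:ℤ)) * (inl (stepFun g))⁻¹ *
        (inr (Multiplicative.ofAdd (1:ℤ)))⁻¹
      = inl (stepFun g) * (inr (Multiplicative.ofAdd (1:ℤ)) * (inl (stepFun g))⁻¹ *
        (inr (Multiplicative.ofAdd (1:ℤ)))⁻¹) := by group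
    _ = inl (stepFun g) * inl (shiftAct M (Multiplicative.ofAdd (1:ℤ)) (stepFun g)⁻¹) := by
        rw [h2]
    _ = inl (stepFun g * shiftAct M (Multiplicative.ofAdd (1:ℤ)) (stepFun g)⁻¹) := by
        rw [← map_mul]
    _ = inl (ptHom g) := by
        congr 1
        funext j
        have hs : shiftAct M (Multiplicative.ofAdd (1:ℤ)) (stepFun g)⁻¹ j
            = ((stepFun g) (j - 1))⁻¹ := rfl
        rw [Pi.mul_apply, hs]
        simp only [stepFun, ptHom_apply]
        rcases lt_trichotomy j 0 with h | h | h
        · rw [if_neg (by omega), if_neg (by omega), if_neg (by omega)]; simp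
        · subst h; norm_num
        · rw [if_pos (by omega), if_pos (by omega), if_neg (by omega)]; simp


section Construction

variable {H : Type u} [Group H]

lemma pow4_pos (s : ℕ) : (0:ℤ) < 4 ^ s := pow_pos (by norm_num) s

lemma pow4_mono {s t : ℕ} (h : s ≤ t) : (4:ℤ) ^ s ≤ 4 ^ t :=
  pow_le_pow_right₀ (by norm_num) h

lemma pow4_inj {s t : ℕ} (h : (4:ℤ) ^ s = 4 ^ t) : s = t := by
  have : (4:ℕ) ^ s = 4 ^ t := by exact_mod_cast h
  exact Nat.pow_right_injective (by norm_num) this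

lemma pow4_diff (a b r : ℕ) : (4:ℤ) ^ a - 4 ^ b ≠ 4 ^ r + 1 := by
  intro h
  have h3 : ((4:ZMod 3)) ^ a - 4 ^ b = 4 ^ r + 1 := by
    have := congrArg (fun z : ℤ => (z : ZMod 3)) h
    push_cast at this
    exact this
  have h4 : (4 : ZMod 3) = 1 := by decide
  rw [h4] at h3
  simp only [one_pow] at h3
  exact absurd h3 (by decide)

open Classical in
noncomputable def gfun (e : ℕ → H) : ℤ → H :=
  fun i => if h : ∃ r : ℕ, i = (4:ℤ) ^ r then e h.choose else 1

lemma gfun_pow (e : ℕ → H) (r : ℕ) : gfun e ((4:ℤ) ^ r) = e r := by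
  have hex : ∃ s : ℕ, (4:ℤ) ^ r = (4:ℤ) ^ s := ⟨r, rfl⟩
  simp only [gfun]
  rw [dif_pos hex]
  exact congrArg e (pow4_inj hex.choose_spec.symm)

lemma gfun_eq_one (e : ℕ → H) {i : ℤ} (h : ¬ ∃ r : ℕ, i = (4:ℤ) ^ r) :
    gfun e i = 1 := by
  simp only [gfun]
  rw [dif_neg h]

lemma gfun_eq_one_of_nonpos (e : ℕ → H) {i : ℤ} (h : i ≤ 0) : gfun e i = 1 := by
  apply gfun_eq_one
  rintro ⟨s, rfl⟩
  exact absurd h (not_le.mpr (pow4_pos s))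

/-- the function generating everything -/
noncomputable def AA (e : ℕ → H) : ℤ → Wr H :=
  fun i => if i < 0 then inr (Multiplicative.ofAdd (1:ℤ)) else inl (stepFun (gfun e i))

lemma step_commutator_one {g g' : H} (h : g = 1 ∨ g' = 1) :
    ⁅(inl (stepFun g) : Wr H), (inl (stepFun g') : Wr H)⁆ = 1 := by
  rcases h with h | h <;> subst h <;>
    simp [stepFun_one]

/-- The main computation: components of the commutator of `x` with its shifted conjugate. -/
lemma Acomm (e : ℕ → H) (r : ℕ) (i : ℤ) :
    ⁅AA e i, AA e (i - ((4:ℤ) ^ r + 1))⁆ =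
      if i ≤ (4:ℤ) ^ r then (inl (ptHom (gfun e i)) : Wr H) else 1 := by
  by_cases h1 : i < 0
  · simp only [AA]
    rw [if_pos h1,
      if_pos (show i - ((4:ℤ) ^ r + 1) < 0 by have := pow4_pos r; omega),
      if_pos (show i ≤ (4:ℤ) ^ r by have := pow4_pos r; omega),
      gfun_eq_one_of_nonpos e (le_of_lt h1)]
    simp
  · push_neg at h1
    by_cases h2 : i ≤ (4:ℤ) ^ r
    · simp only [AA]
      rw [if_neg (not_lt.mpr h1),
        if_pos (show i - ((4:ℤ) ^ r + 1) < 0 by omega), if_pos h2]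
      exact step_comm _
    · simp only [AA]
      rw [if_neg (not_lt.mpr h1),
        if_neg (show ¬ (i - ((4:ℤ) ^ r + 1) < 0) by push_neg at h2; omega),
        if_neg h2]
      apply step_commutator_one
      by_cases hi : ∃ a : ℕ, i = (4:ℤ) ^ a
      · by_cases hik : ∃ b : ℕ, i - ((4:ℤ) ^ r + 1) = (4:ℤ) ^ b
        · exfalso
          obtain ⟨a, ha⟩ := hi
          obtain ⟨b, hb⟩ := hik
          exact pow4_diff a b r (by omega)
        · exact Or.inr (gfun_eq_one e hik)
      · exact Or.inl (gfun_eq_one e hi)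

end Construction


section Level2

variable {H : Type u} [Group H]

lemma left_mul_of_right_one {M : Type v} [Group M] (a b : Wr M) (ha : a.right = 1) :
    (a * b).left = a.left * b.left := by
  rw [mul_left, ha, map_one]
  rfl

lemma left_inv_of_right_one {M : Type v} [Group M] (a : Wr M) (ha : a.right = 1) :
    (a⁻¹).left = a.left⁻¹ := by
  rw [inv_left, ha]
  simp

/-- The subgroup of the double wreath product with trivial shift parts and values in `D`. -/
def LL (D : Subgroup H) : Subgroup (Wr (Wr H)) where
  carrier := {w | w.right = 1 ∧ (∀ i, (w.left i).right = 1) ∧ ∀ i j, (w.left i).left j ∈ D}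
  one_mem' := ⟨rfl, fun _ => rfl, fun _ _ => one_mem D⟩
  mul_mem' := by
    rintro a b ⟨ha1, ha2, ha3⟩ ⟨hb1, hb2, hb3⟩
    have hab : (a * b).left = a.left * b.left := left_mul_of_right_one a b ha1
    refine ⟨by rw [mul_right, ha1, hb1, mul_one], ?_, ?_⟩
    · intro i
      rw [hab, Pi.mul_apply, mul_right, ha2 i, hb2 i, mul_one]
    · intro i j
      rw [hab, Pi.mul_apply, left_mul_of_right_one _ _ (ha2 i), Pi.mul_apply]
      exact mul_mem (ha3 i j) (hb3 i j)
  inv_mem' := by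
    rintro a ⟨ha1, ha2, ha3⟩
    have hai : (a⁻¹).left = a.left⁻¹ := left_inv_of_right_one a ha1
    refine ⟨by rw [inv_right, ha1, inv_one], ?_, ?_⟩
    · intro i
      rw [hai, Pi.inv_apply, inv_right, ha2 i, inv_one]
    · intro i j
      rw [hai, Pi.inv_apply, left_inv_of_right_one _ (ha2 i), Pi.inv_apply]
      exact inv_mem (ha3 i j)

lemma mem_LL {D : Subgroup H} {w : Wr (Wr H)} :
    w ∈ LL D ↔ w.right = 1 ∧ (∀ i, (w.left i).right = 1) ∧ ∀ i j, (w.left i).left j ∈ D :=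
  Iff.rfl

lemma der1 : derivedSeries (Wr (Wr H)) 1 ≤
    (rightHom : Wr (Wr H) →* Multiplicative ℤ).ker := by
  rw [derivedSeries_succ, derivedSeries_zero]
  rw [Subgroup.commutator_le]
  intro p _ q _
  rw [MonoidHom.mem_ker]
  exact commutator_right p q

lemma der2 : derivedSeries (Wr (Wr H)) 2 ≤ LL (⊤ : Subgroup H) := by
  have h := commutator_mono (der1 (H := H)) (der1 (H := H))
  refine le_trans ?_ (le_trans h ?_)
  · exact le_of_eq (derivedSeries_succ _ 1)
  · rw [Subgroup.commutator_le]
    intro a ha b hb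
    rw [MonoidHom.mem_ker] at ha hb
    have ha' : a.right = 1 := ha
    have hb' : b.right = 1 := hb
    have hc := commutator_of_right_one a b ha' hb'
    refine ⟨commutator_right a b, ?_, fun _ _ => mem_top _⟩
    intro i
    rw [hc, left_inl, pi_commutator_apply]
    exact commutator_right _ _

lemma derStep (D : Subgroup H) (a b : Wr (Wr H)) (ha : a ∈ LL D) (hb : b ∈ LL D) :
    ⁅a, b⁆ ∈ LL ⁅D, D⁆ := by
  obtain ⟨ha1, ha2, ha3⟩ := ha
  obtain ⟨hb1, hb2, hb3⟩ := hb
  have hc := commutator_of_right_one a b ha1 hb1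
  refine ⟨commutator_right a b, ?_, ?_⟩
  · intro i
    rw [hc, left_inl, pi_commutator_apply]
    exact commutator_right _ _
  · intro i j
    rw [hc, left_inl, pi_commutator_apply,
      commutator_of_right_one _ _ (ha2 i) (hb2 i), left_inl, pi_commutator_apply]
    exact Subgroup.commutator_mem_commutator (ha3 i j) (hb3 i j)

lemma derMain (m : ℕ) :
    derivedSeries (Wr (Wr H)) (m + 2) ≤ LL (derivedSeries H m) := by
  induction m with
  | zero => rw [derivedSeries_zero]; exact der2
  | succ m ih =>
    rw [show m + 1 + 2 = (m + 2) + 1 from rfl, derivedSeries_succ, derivedSeries_succ]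
    refine le_trans (commutator_mono ih ih) ?_
    rw [Subgroup.commutator_le]
    intro a ha b hb
    exact derStep _ a b ha hb

lemma LLbot : LL (⊥ : Subgroup H) = ⊥ := by
  refine le_antisymm ?_ bot_le
  rintro w ⟨h1, h2, h3⟩
  rw [Subgroup.mem_bot]
  apply SemidirectProduct.ext
  · funext i
    show w.left i = (1 : ℤ → Wr H) i
    rw [Pi.one_apply]
    apply SemidirectProduct.ext
    · funext j
      have := h3 i j
      rw [Subgroup.mem_bot] at this
      rw [this]
      rfl
    · exact h2 i
  · exact h1

lemma derW2 {l : ℕ} (hl : derivedSeries H l = ⊥) :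
    derivedSeries (Wr (Wr H)) (l + 2) = ⊥ := by
  have := derMain (H := H) l
  rw [hl, LLbot] at this
  exact le_bot_iff.mp this

def postcomp {M : Type v} {M' : Type*} [Group M] [Group M'] (f : M →* M') :
    (ℤ → M) →* (ℤ → M') where
  toFun v := fun i => f (v i)
  map_one' := by funext i; simp
  map_mul' a b := by funext i; simp

/-- killing the coefficients -/
def ρH : Wr (Wr H) →* Wr (Multiplicative ℤ) :=
  SemidirectProduct.map (postcomp rightHom) (MonoidHom.id _)
    (fun _ => MonoidHom.ext fun _ => funext fun _ => rfl)

lemma mem_ker_ρH {w : Wr (Wr H)} :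
    w ∈ ρH.ker ↔ (w.right = 1 ∧ ∀ i, (w.left i).right = 1) := by
  rw [MonoidHom.mem_ker]
  constructor
  · intro h
    constructor
    · have := congrArg SemidirectProduct.right h
      simpa [ρH] using this
    · intro i
      have := congrArg (fun z : Wr (Multiplicative ℤ) => z.left i) h
      simpa [ρH, postcomp] using this
  · rintro ⟨h1, h2⟩
    apply SemidirectProduct.ext
    · funext i
      show rightHom (w.left i) = (1 : ℤ → Multiplicative ℤ) i
      rw [Pi.one_apply]
      exact h2 i
    · exact h1

def ιH : H →* Wr (Wr H) :=
  (inl : (ℤ → Wr H) →* Wr (Wr H)).comp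
    ((ptHom : Wr H →* (ℤ → Wr H)).comp
      ((inl : (ℤ → H) →* Wr H).comp (ptHom : H →* (ℤ → H))))

lemma ιH_apply (g : H) : ιH g = inl (ptHom (inl (ptHom g))) := rfl

lemma ptHom_injective {M : Type v} [Group M] : Function.Injective (ptHom : M →* (ℤ → M)) := by
  intro a b h
  have := congrFun h 0
  simpa [ptHom_apply] using this

lemma ιH_injective : Function.Injective (ιH : H →* Wr (Wr H)) :=
  inl_injective.comp (ptHom_injective.comp (inl_injective.comp ptHom_injective))

lemma ιH_mem_ker_ρH (g : H) : ιH g ∈ ρH.ker := by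
  rw [mem_ker_ρH, ιH_apply]
  refine ⟨rfl, fun i => ?_⟩
  rw [left_inl, ptHom_apply]
  by_cases hi : i = 0
  · rw [if_pos hi]; rfl
  · rw [if_neg hi]; rfl

lemma conj_ιH (w : Wr (Wr H)) (h1 : w.right = 1) (h2 : ∀ i, (w.left i).right = 1) (g : H) :
    w * ιH g * w⁻¹ = ιH (((w.left 0).left 0) * g * ((w.left 0).left 0)⁻¹) := by
  conv_lhs => rw [eq_inl_of_right_one w h1, ιH_apply, ← map_inv, ← map_mul, ← map_mul]
  rw [ιH_apply]
  congr 1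
  funext i
  rw [Pi.mul_apply, Pi.mul_apply, Pi.inv_apply]
  by_cases hi : i = 0
  · subst hi
    rw [ptHom_apply, if_pos rfl, ptHom_apply, if_pos rfl]
    rw [eq_inl_of_right_one (w.left 0) (h2 0), ← map_inv, ← map_mul, ← map_mul]
    congr 1
    funext j
    rw [Pi.mul_apply, Pi.mul_apply, Pi.inv_apply, ptHom_apply, ptHom_apply]
    by_cases hj : j = 0
    · subst hj
      rw [if_pos rfl, if_pos rfl]
      rfl
    · rw [if_neg hj, if_neg hj, mul_one, mul_inv_cancel]
  · rw [ptHom_apply, if_neg hi, ptHom_apply, if_neg hi, mul_one, mul_inv_cancel]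

end Level2


section Generation

variable {H : Type u} [Group H]

lemma inr_conj_inl {M : Type v} [Group M] (m : ℤ) (v : ℤ → M) :
    (inr (Multiplicative.ofAdd m) : Wr M) * inl v * (inr (Multiplicative.ofAdd m))⁻¹ =
      inl (fun i => v (i - m)) := by
  rw [← map_inv]
  exact (inl_aut (Multiplicative.ofAdd m) v).symm

noncomputable def xgen (e : ℕ → H) : Wr (Wr H) := inl (AA e)

def ygen (H : Type u) [Group H] : Wr (Wr H) := inr (Multiplicative.ofAdd (1:ℤ))

variable (e : ℕ → H)

noncomputable def Sgen (e : ℕ → H) : Subgroup (Wr (Wr H)) :=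
  Subgroup.closure {xgen e, ygen H}

lemma xgen_mem : xgen e ∈ Sgen e := Subgroup.subset_closure (Set.mem_insert _ _)

lemma ygen_mem : ygen H ∈ Sgen e :=
  Subgroup.subset_closure (Set.mem_insert_of_mem _ rfl)

lemma inr_mem (m : ℤ) : (inr (Multiplicative.ofAdd m) : Wr (Wr H)) ∈ Sgen e := by
  have h : (inr (Multiplicative.ofAdd m) : Wr (Wr H)) = (ygen H) ^ m := by
    rw [ygen, ← map_zpow]
    congr 1
    rw [← ofAdd_zsmul]
    norm_num
  rw [h]
  exact Subgroup.zpow_mem _ (ygen_mem e) m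

noncomputable def Yel (r : ℕ) : Wr (Wr H) :=
  ⁅xgen e, inr (Multiplicative.ofAdd ((4:ℤ) ^ r + 1)) * xgen e *
    (inr (Multiplicative.ofAdd ((4:ℤ) ^ r + 1)))⁻¹⁆

lemma Yel_mem (r : ℕ) : Yel e r ∈ Sgen e := by
  rw [Yel, commutatorElement_def]
  have hc : inr (Multiplicative.ofAdd ((4:ℤ) ^ r + 1)) * xgen e *
      (inr (Multiplicative.ofAdd ((4:ℤ) ^ r + 1)))⁻¹ ∈ Sgen e :=
    mul_mem (mul_mem (inr_mem e _) (xgen_mem e)) (inv_mem (inr_mem e _))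
  exact mul_mem (mul_mem (mul_mem (xgen_mem e) hc) (inv_mem (xgen_mem e))) (inv_mem hc)

lemma Yel_eq (r : ℕ) :
    Yel e r = inl (fun i => if i ≤ (4:ℤ) ^ r then (inl (ptHom (gfun e i)) : Wr H) else 1) := by
  rw [Yel, xgen, inr_conj_inl, inl_commutator]
  congr 1
  funext i
  rw [pi_commutator_apply]
  exact Acomm e r i

noncomputable def Φel (r : ℕ) : ℤ → Wr H :=
  fun i => if i = (4:ℤ) ^ r then inl (ptHom (e r)) else 1

lemma Φel_zero : (inl (Φel e 0) : Wr (Wr H)) = Yel e 0 := by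
  rw [Yel_eq]
  congr 1
  funext i
  rw [Φel]
  by_cases hi : i = (4:ℤ) ^ 0
  · rw [if_pos hi, if_pos (le_of_eq hi), hi, gfun_pow]
  · rw [if_neg hi]
    by_cases h2 : i ≤ (4:ℤ) ^ 0
    · rw [if_pos h2]
      rw [gfun_eq_one_of_nonpos e (show i ≤ 0 by norm_num at hi h2 ⊢; omega)]
      simp
    · rw [if_neg h2]

lemma Φel_succ (r : ℕ) :
    (inl (Φel e (r + 1)) : Wr (Wr H)) = Yel e (r + 1) * (Yel e r)⁻¹ := by
  rw [Yel_eq, Yel_eq, ← map_inv, ← map_mul]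
  congr 1
  funext i
  rw [Pi.mul_apply, Pi.inv_apply, Φel]
  have hps : (4:ℤ) ^ (r + 1) = 4 ^ r * 4 := pow_succ 4 r
  have hp0 : (0:ℤ) < 4 ^ r := pow4_pos r
  by_cases h1 : i ≤ (4:ℤ) ^ r
  · rw [if_neg (show ¬ i = (4:ℤ) ^ (r + 1) by omega),
      if_pos (show i ≤ (4:ℤ) ^ (r + 1) by omega), if_pos h1, mul_inv_cancel]
  · rw [if_neg h1, inv_one, mul_one]
    by_cases h2 : i ≤ (4:ℤ) ^ (r + 1)
    · rw [if_pos h2]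
      by_cases h3 : i = (4:ℤ) ^ (r + 1)
      · rw [if_pos h3, h3, gfun_pow]
      · rw [if_neg h3]
        have hg : gfun e i = 1 := by
          apply gfun_eq_one
          rintro ⟨s, rfl⟩
          rcases le_or_gt s r with hs | hs
          · exact h1 (pow4_mono hs)
          · exact h3 (le_antisymm h2 (pow4_mono hs))
        rw [hg]
        simp
    · rw [if_neg h2, if_neg (fun h => h2 (le_of_eq h))]

lemma Φel_mem (r : ℕ) : (inl (Φel e r) : Wr (Wr H)) ∈ Sgen e := by
  cases r with
  | zero => rw [Φel_zero]; exact Yel_mem e 0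
  | succ r => rw [Φel_succ]; exact mul_mem (Yel_mem e _) (inv_mem (Yel_mem e _))

lemma ιH_eq_conj (r : ℕ) :
    ιH (e r) = inr (Multiplicative.ofAdd (-(4:ℤ) ^ r)) * inl (Φel e r) *
      (inr (Multiplicative.ofAdd (-(4:ℤ) ^ r)))⁻¹ := by
  rw [inr_conj_inl, ιH_apply]
  congr 1
  funext i
  rw [Φel, ptHom_apply]
  by_cases hi : i = 0
  · rw [if_pos (show i - -(4:ℤ) ^ r = 4 ^ r by omega), if_pos hi]
  · rw [if_neg (show ¬ i - -(4:ℤ) ^ r = 4 ^ r by omega), if_neg hi]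

lemma ιH_mem_Sgen (hsurj : Function.Surjective e) (g : H) : ιH g ∈ Sgen e := by
  obtain ⟨r, rfl⟩ := hsurj g
  rw [ιH_eq_conj]
  exact mul_mem (mul_mem (inr_mem e _) (Φel_mem e r)) (inv_mem (inr_mem e _))

end Generation

end NNproof

theorem subnormal_embedding_of_solvable_into_two_generated_solvable
    {H : Type u} [Group H] (hH : Countable H) (l : ℕ)
    (hl : derivedSeries H l = ⊥) (hleast : ∀ m < l, derivedSeries H m ≠ ⊥) :
    ∃ G : GrpCat.{u}, (∃ a b : ↥G, Subgroup.closure {a, b} = ⊤) ∧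
      derivedSeries ↥G (l + 2) = ⊥ ∧
      ∃ Htilde : Subgroup ↥G, IsSubnormalSubgroup Htilde ∧ Nonempty (H ≃* ↥Htilde) := by
  classical
  have hne : Nonempty H := ⟨1⟩
  obtain ⟨e, he⟩ := exists_surjective_nat H
  refine ⟨GrpCat.of ↥(NNproof.Sgen e), ?_, ?_, ?_⟩
  · -- two-generated
    refine ⟨⟨NNproof.xgen e, NNproof.xgen_mem e⟩, ⟨NNproof.ygen H, NNproof.ygen_mem e⟩, ?_⟩
    show Subgroup.closure _ = ⊤
    have h1 : ({⟨NNproof.xgen e, NNproof.xgen_mem e⟩, ⟨NNproof.ygen H, NNproof.ygen_mem e⟩} :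
        Set ↥(NNproof.Sgen e)) =
        (((↑) : ↥(NNproof.Sgen e) → NNproof.Wr (NNproof.Wr H)) ⁻¹'
          ({NNproof.xgen e, NNproof.ygen H} : Set (NNproof.Wr (NNproof.Wr H)))) := by
      ext z
      simp only [Set.mem_insert_iff, Set.mem_singleton_iff, Set.mem_preimage]
      constructor
      · rintro (rfl | rfl)
        · exact Or.inl rfl
        · exact Or.inr rfl
      · rintro (h | h)
        · exact Or.inl (Subtype.ext h)
        · exact Or.inr (Subtype.ext h)
    rw [h1]
    exact Subgroup.closure_closure_coe_preimage
  · -- derived length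
    have hW2 : derivedSeries (NNproof.Wr (NNproof.Wr H)) (l + 2) = ⊥ := NNproof.derW2 hl
    have hmap := map_derivedSeries_le_derivedSeries (NNproof.Sgen e).subtype (l + 2)
    rw [hW2] at hmap
    exact (Subgroup.map_eq_bot_iff_of_injective _
      (Subgroup.subtype_injective _)).mp (le_bot_iff.mp hmap)
  · -- subnormal embedded copy
    have hmem : ∀ g : H, NNproof.ιH g ∈ NNproof.Sgen e := fun g => NNproof.ιH_mem_Sgen e he g
    set ι' : H →* ↥(NNproof.Sgen e) := (NNproof.ιH).codRestrict _ hmem with hι'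
    have hinj : Function.Injective ι' := fun a b hab =>
      NNproof.ιH_injective (congrArg Subtype.val hab)
    set C1 : Subgroup ↥(NNproof.Sgen e) :=
      (NNproof.ρH.ker).comap (NNproof.Sgen e).subtype with hC1
    refine ⟨ι'.range, ⟨2, ![ι'.range, C1, ⊤], rfl, rfl, ?_⟩, ⟨MonoidHom.ofInjective hinj⟩⟩
    intro i
    fin_cases i
    · refine ⟨?_, ?_⟩
      · show ι'.range ≤ C1
        intro z hz
        obtain ⟨g, rfl⟩ := hz
        show ι' g ∈ C1
        have : (NNproof.Sgen e).subtype (ι' g) ∈ NNproof.ρH.ker := NNproof.ιH_mem_ker_ρH g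
        exact Subgroup.mem_comap.mpr this
      · show (ι'.range.subgroupOf C1).Normal
        constructor
        intro n hn gg
        rw [Subgroup.mem_subgroupOf] at hn ⊢
        obtain ⟨g0, hg0⟩ := hn
        have hker : ((gg : ↥(NNproof.Sgen e)) : NNproof.Wr (NNproof.Wr H)) ∈ NNproof.ρH.ker :=
          Subgroup.mem_comap.mp gg.2
        obtain ⟨h1, h2⟩ := NNproof.mem_ker_ρH.mp hker
        set w : NNproof.Wr (NNproof.Wr H) := ((gg : ↥(NNproof.Sgen e)) : NNproof.Wr (NNproof.Wr H))
        refine ⟨((w.left 0).left 0) * g0 * ((w.left 0).left 0)⁻¹, Subtype.ext ?_⟩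
        have hg0' : ((n : ↥(NNproof.Sgen e)) : NNproof.Wr (NNproof.Wr H)) = NNproof.ιH g0 :=
          (congrArg Subtype.val hg0).symm
        have hcoe : (((gg * n * gg⁻¹ : ↥C1) : ↥(NNproof.Sgen e)) : NNproof.Wr (NNproof.Wr H))
            = w * ((n : ↥(NNproof.Sgen e)) : NNproof.Wr (NNproof.Wr H)) * w⁻¹ := rfl
        show NNproof.ιH _ = _
        rw [hcoe, hg0', NNproof.conj_ιH w h1 h2 g0]
    · refine ⟨le_top, ?_⟩
      have hnorm : C1.Normal := Subgroup.Normal.comap (MonoidHom.normal_ker NNproof.ρH) _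
      exact Subgroup.Normal.subgroupOf hnorm ⊤
end

section
/- Let U be a set of words and let H be a countable group satisfying the laws U. Then there exists a countable group M such that the derived subgroup M′ of M satisfies the laws U (so that M lies in the product variety 𝔘𝔄), and M has a subnormal subgroup H̃ with H̃ isomorphic to H and H̃ contained in the derived subgroup M′. -/
universe u

namespace SubnormalEmbed

open scoped commutatorElement

variable (H : Type u) [Group H]

def shiftAut : MulAut (ℤ → H) where
  toFun f := fun n => f (n + 1)
  invFun f := fun n => f (n - 1)
  left_inv f := funext fun n => by simp
  right_inv f := funext fun n => by simp
  map_mul' f g := rfl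

lemma shiftAut_apply (f : ℤ → H) (n : ℤ) : shiftAut H f n = f (n + 1) := rfl

def phi : Multiplicative ℤ →* MulAut (ℤ → H) := zpowersHom _ (shiftAut H)

abbrev WP := SemidirectProduct (ℤ → H) (Multiplicative ℤ) (phi H)

def iota : H →* WP H :=
  SemidirectProduct.inl.comp (MonoidHom.mulSingle (fun _ : ℤ => H) (-1))

lemma iota_apply (h : H) : iota H h = SemidirectProduct.inl (Pi.mulSingle (-1) h) := rfl

lemma iota_injective : Function.Injective (iota H) := by
  intro a b hab
  have := congrArg (fun m : WP H => m.left (-1)) hab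
  simpa [iota, MonoidHom.mulSingle_apply] using this

lemma iota_mem_commutator (h : H) : iota H h ∈ commutator (WP H) := by
  have key : iota H h =
      ⁅(SemidirectProduct.inr (Multiplicative.ofAdd 1) : WP H),
        SemidirectProduct.inl (fun n : ℤ => if 0 ≤ n then h else 1)⁆ := by
    have h1 : (SemidirectProduct.inr (Multiplicative.ofAdd 1) : WP H) *
        SemidirectProduct.inl (fun n : ℤ => if 0 ≤ n then h else 1) *
        (SemidirectProduct.inr (Multiplicative.ofAdd 1) : WP H)⁻¹ =
        SemidirectProduct.inl (phi H (Multiplicative.ofAdd 1)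
          (fun n : ℤ => if 0 ≤ n then h else 1)) := by
      rw [SemidirectProduct.inl_aut, map_inv]
    rw [commutatorElement_def, h1, ← map_inv, ← map_mul, iota_apply]
    congr 1
    have hphi : phi H (Multiplicative.ofAdd 1) = shiftAut H := by
      simp [phi]
    rw [hphi]
    funext n
    simp only [Pi.mul_apply, Pi.inv_apply, shiftAut_apply]
    rcases eq_or_ne n (-1) with rfl | hn
    · norm_num
    · rw [Pi.mulSingle_apply, if_neg hn]
      by_cases h0 : 0 ≤ n
      · rw [if_pos h0, if_pos (by omega), mul_inv_cancel]
      · rw [if_neg h0, if_neg (by omega), one_mul, inv_one]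
  rw [key, commutator_def]
  exact Subgroup.commutator_mem_commutator (Subgroup.mem_top _) (Subgroup.mem_top _)

lemma right_eq_one_of_mem_commutator {m : WP H} (hm : m ∈ commutator (WP H)) :
    m.right = 1 := by
  have hle : commutator (WP H) ≤ (SemidirectProduct.rightHom :
      WP H →* Multiplicative ℤ).ker := by
    rw [commutator_def, Subgroup.commutator_le]
    intro g1 _ g2 _
    rw [MonoidHom.mem_ker, map_commutatorElement]
    exact commutatorElement_eq_one_iff_commute.2 (mul_comm _ _)
  exact hle hm

def evHom (n : ℤ) : ↥(commutator (WP H)) →* H where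
  toFun m := (m : WP H).left n
  map_one' := rfl
  map_mul' m₁ m₂ := by
    have h1 : ((m₁ : WP H)).right = 1 := right_eq_one_of_mem_commutator H m₁.2
    show ((m₁ : WP H) * (m₂ : WP H)).left n = _
    rw [SemidirectProduct.mul_left, h1, map_one]
    rfl

lemma laws (U : Set (FreeGroup ℕ)) (hHU : SatisfiesLaws H U) :
    SatisfiesLaws ↥(commutator (WP H)) U := by
  intro φ w hw
  have hleft : ∀ n : ℤ, ((φ w : WP H)).left n = 1 := fun n =>
    hHU ((evHom H n).comp φ) w hw
  have hright : ((φ w : WP H)).right = 1 :=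
    right_eq_one_of_mem_commutator H (φ w).2
  apply Subtype.ext
  apply SemidirectProduct.ext
  · exact funext hleft
  · exact hright

lemma subnormal : IsSubnormalSubgroup ((iota H).range) := by
  refine ⟨2, ![(iota H).range,
    (SemidirectProduct.inl : (ℤ → H) →* WP H).range, ⊤], rfl, rfl, ?_⟩
  intro i
  fin_cases i
  · constructor
    · rintro m ⟨h, rfl⟩
      exact ⟨Pi.mulSingle (-1) h, rfl⟩
    · constructor
      intro x hx g
      rw [Subgroup.mem_subgroupOf] at hx ⊢
      obtain ⟨h, hh⟩ := hx
      obtain ⟨b, hb⟩ := g.2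
      refine ⟨b (-1) * h * (b (-1))⁻¹, ?_⟩
      have hconj : ((g : WP H) * (x : WP H) * (g : WP H)⁻¹) =
          SemidirectProduct.inl (b * Pi.mulSingle (-1) h * b⁻¹) := by
        rw [← hb, ← hh, iota_apply, ← map_inv, ← map_mul, ← map_mul]
      show iota H _ = ((g * x * g⁻¹ : _) : WP H)
      rw [show ((g * x * g⁻¹ : _) : WP H) = (g : WP H) * (x : WP H) * (g : WP H)⁻¹ from rfl,
        hconj, iota_apply]
      congr 1
      funext n
      rcases eq_or_ne n (-1) with rfl | hn
      · simp
      · simp [Pi.mulSingle_apply, hn]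
  · refine ⟨le_top, ?_⟩
    have hn : ((SemidirectProduct.inl : (ℤ → H) →* WP H).range).Normal := by
      rw [SemidirectProduct.range_inl_eq_ker_rightHom]
      exact MonoidHom.normal_ker _
    exact hn.subgroupOf _

end SubnormalEmbed

theorem subnormal_embedding_into_derived_subgroup_UA
    {H : Type u} [Group H] (hH : Countable H)
    (U : Set (FreeGroup ℕ)) (hHU : SatisfiesLaws H U) :
    ∃ M : GrpCat.{u}, SatisfiesLaws ↥(commutator ↥M) U ∧
      ∃ Htilde : Subgroup ↥M, IsSubnormalSubgroup Htilde ∧ Nonempty (H ≃* ↥Htilde) ∧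
        Htilde ≤ commutator ↥M := by
  refine ⟨GrpCat.of (SubnormalEmbed.WP H), SubnormalEmbed.laws H U hHU,
    (SubnormalEmbed.iota H).range, SubnormalEmbed.subnormal H,
    ⟨MonoidHom.ofInjective (SubnormalEmbed.iota_injective H)⟩, ?_⟩
  rintro m ⟨h, rfl⟩
  exact SubnormalEmbed.iota_mem_commutator H h
end
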